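/- arXiv:2508.12432 — 9 statements merged into one kernel-verified Lean document; each statement's English description precedes it below -/
import Mathlib

section
/- Let μ̂ ≥ 0, δ̂ ≥ 0, χ̂ ≥ 0 and real numbers a11, a12, a21, a22 satisfy: a11·a22 − a21·a12 > 0, a11 + a22 < 0, a11·a22 < 0, (δ̂ − a22)(μ̂ − a11) < 0, and (δ̂ − a22)(μ̂ − a11) − a21(a12 + χ̂) > 0. Set Δ2 = μ̂ + δ̂ − a11 − a22 and, for ĉ ∈ ℝ, Δ4(ĉ) = (ĉ² + Δ2²)(δ̂ − a22)(μ̂ − a11) − a21·Δ2²·(a12 + χ̂), and define the threshold ĉ*² = −Δ2²·[(δ̂ − a22)(μ̂ − a11) − a21(a12 + χ̂)] / [(δ̂ − a22)(μ̂ − a11)]. Then ĉ*² > 0, Δ2 > 0, and for every ĉ ∈ ℝ: Δ4(ĉ) > 0 if and only if ĉ² < ĉ*², and Δ4(ĉ) < 0 if and only if ĉ² > ĉ*². In particular the chain of signs of the triad (1, Δ2, Δ4(ĉ)) is (+,+,+) for ĉ² < ĉ*² and (+,+,−) for ĉ² > ĉ*². -/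
/-! With `P = (δ̂ - a₂₂)(μ̂ - a₁₁) < 0` and `K = Δ₂² (P - a₂₁(a₁₂ + χ̂)) > 0`, the quantity
`Δ₄(ĉ) = ĉ² P + K` is an affine function of `ĉ²` with negative slope, vanishing exactly at
`ĉ*² = -K / P > 0`. -/

section AffineSign

variable {α : Type*} [Field α] [LinearOrder α] [IsStrictOrderedRing α] {x p k : α}

theorem mul_add_pos_iff_lt_neg_div (hp : p < 0) : 0 < x * p + k ↔ x < -k / p := by
  rw [lt_div_iff_of_neg hp]
  constructor <;> intro h <;> linarith

theorem mul_add_neg_iff_neg_div_lt (hp : p < 0) : x * p + k < 0 ↔ -k / p < x := by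
  rw [div_lt_iff_of_neg hp]
  constructor <;> intro h <;> linarith

end AffineSign

theorem stmt_0_general (mu de ch a11 a12 a21 a22 : ℝ)
    (hmu : 0 ≤ mu) (hde : 0 ≤ de)
    (h2 : a11 + a22 < 0)
    (h4 : (de - a22) * (mu - a11) < 0)
    (h5 : (de - a22) * (mu - a11) - a21 * (a12 + ch) > 0) :
    let Δ2 : ℝ := mu + de - a11 - a22
    let Δ4 : ℝ → ℝ := fun c =>
      (c ^ 2 + Δ2 ^ 2) * ((de - a22) * (mu - a11)) - a21 * Δ2 ^ 2 * (a12 + ch)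
    let cstarSq : ℝ :=
      -Δ2 ^ 2 * ((de - a22) * (mu - a11) - a21 * (a12 + ch)) / ((de - a22) * (mu - a11))
    cstarSq > 0 ∧ Δ2 > 0 ∧
      ∀ c : ℝ, (Δ4 c > 0 ↔ c ^ 2 < cstarSq) ∧ (Δ4 c < 0 ↔ c ^ 2 > cstarSq) := by
  intro Δ2 Δ4 cstarSq
  set P := (de - a22) * (mu - a11)
  set K := Δ2 ^ 2 * (P - a21 * (a12 + ch))
  have hΔ2 : Δ2 > 0 := by simp only [Δ2]; linarith
  have hK : 0 < K := mul_pos (pow_pos hΔ2 2) h5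
  have hcstar : cstarSq = -K / P := by simp only [cstarSq, K]; ring
  have hΔ4 : ∀ c, Δ4 c = c ^ 2 * P + K := fun c => by simp only [Δ4, K]; ring
  refine ⟨hcstar ▸ div_pos_of_neg_of_neg (neg_neg_of_pos hK) h4, hΔ2, fun c => ?_⟩
  rw [hΔ4, hcstar]
  exact ⟨mul_add_pos_iff_lt_neg_div h4, mul_add_neg_iff_neg_div_lt h4⟩

/-- Lemma 1 (Hankel-triad sign-chain lemma): algebraic fact about real parameters. -/
theorem stmt_0 (mu de ch a11 a12 a21 a22 : ℝ)
    (hmu : 0 ≤ mu) (hde : 0 ≤ de) (hch : 0 ≤ ch)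
    (h1 : a11 * a22 - a21 * a12 > 0)
    (h2 : a11 + a22 < 0)
    (h3 : a11 * a22 < 0)
    (h4 : (de - a22) * (mu - a11) < 0)
    (h5 : (de - a22) * (mu - a11) - a21 * (a12 + ch) > 0) :
    let Δ2 : ℝ := mu + de - a11 - a22
    let Δ4 : ℝ → ℝ := fun c =>
      (c ^ 2 + Δ2 ^ 2) * ((de - a22) * (mu - a11)) - a21 * Δ2 ^ 2 * (a12 + ch)
    let cstarSq : ℝ :=
      -Δ2 ^ 2 * ((de - a22) * (mu - a11) - a21 * (a12 + ch)) / ((de - a22) * (mu - a11))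
    cstarSq > 0 ∧ Δ2 > 0 ∧
      ∀ c : ℝ, (Δ4 c > 0 ↔ c ^ 2 < cstarSq) ∧ (Δ4 c < 0 ↔ c ^ 2 > cstarSq) :=
  stmt_0_general mu de ch a11 a12 a21 a22 hmu hde h2 h4 h5
end

section
/- Let μ̂, δ̂, χ̂, ĉ, a11, a12, a21, a22 be real numbers. Consider the 2×2 complex matrix A with rows (a11 − μ̂ − i·ĉ, a12 + χ̂) and (a21, a22 − δ̂). Set Δ2 = μ̂ + δ̂ − a11 − a22 and Δ4 = (ĉ² + Δ2²)(δ̂ − a22)(μ̂ − a11) − a21·Δ2²·(a12 + χ̂). If Δ2 > 0 and Δ4 > 0, then every eigenvalue λ ∈ ℂ of A (i.e., every λ for which A·v = λ·v has a nonzero solution v ∈ ℂ²) satisfies Re λ < 0. -/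
/-!
An eigenvalue `λ` of `A` is a root of `(λ - α + i c)(λ - β) = γ` with `α = a₁₁ - μ̂`,
`β = a₂₂ - δ̂`, `γ = a₂₁ (a₁₂ + χ̂)`. Writing `λ = x + i y`, the imaginary part of this equation
gives `y (2x - α - β) = -c (x - β)`, and eliminating `y` from the real part leaves a real quartic
`F(x) = 0`. With `d = Δ₂ = -(α + β)`, the identity
`d² F(x) = (2x + d)² Δ₄ + (x² + d x) (d² (2x + d)² + c² (α - β)²)`
shows `F(x) > 0` whenever `x ≥ 0`, so no root has nonnegative real part.
-/

open Complex

/-- The real quartic in `x = Re λ` left after eliminating `Im λ`. -/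
def stabilityResolvent (α β γ c x : ℝ) : ℝ :=
  ((x - α) * (x - β) - γ) * (2 * x - α - β) ^ 2 + c ^ 2 * (x - α) * (x - β)

theorem stabilityResolvent_eq_zero {α β γ c : ℝ} {z : ℂ}
    (hz : (z - α + I * c) * (z - β) = γ) : stabilityResolvent α β γ c z.re = 0 := by
  have hre := congrArg re hz
  have him := congrArg im hz
  simp only [mul_re, mul_im, add_re, add_im, sub_re, sub_im, ofReal_re, ofReal_im,
    I_re, I_im] at hre him
  set x := z.re
  set y := z.im
  -- `him` reads `y (2x - α - β) = -c (x - β)`; multiply `hre` by `(2x - α - β)²` and substitute.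
  unfold stabilityResolvent
  linear_combination (2 * x - α - β) ^ 2 * hre
    + (y * (2 * x - α - β) - c * (x - β) + c * (2 * x - α - β)) * him

theorem stabilityResolvent_pos {α β γ c x : ℝ} (hd : 0 < -(α + β))
    (hΔ : 0 < (c ^ 2 + (α + β) ^ 2) * (α * β) - γ * (α + β) ^ 2) (hx : 0 ≤ x) :
    0 < stabilityResolvent α β γ c x := by
  set d := -(α + β) with hd_def
  have hidentity : d ^ 2 * stabilityResolvent α β γ c x
      = (2 * x + d) ^ 2 * ((c ^ 2 + (α + β) ^ 2) * (α * β) - γ * (α + β) ^ 2)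
        + (x ^ 2 + d * x) * (d ^ 2 * (2 * x + d) ^ 2 + c ^ 2 * (α - β) ^ 2) := by
    rw [hd_def, stabilityResolvent]; ring
  have hfirst : 0 < (2 * x + d) ^ 2 * ((c ^ 2 + (α + β) ^ 2) * (α * β) - γ * (α + β) ^ 2) :=
    mul_pos (by positivity) hΔ
  have hsecond : 0 ≤ (x ^ 2 + d * x) * (d ^ 2 * (2 * x + d) ^ 2 + c ^ 2 * (α - β) ^ 2) := by
    positivity
  exact pos_of_mul_pos_right (hidentity ▸ add_pos_of_pos_of_nonneg hfirst hsecond) (sq_nonneg d)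

theorem re_neg_of_mul_eq {α β γ c : ℝ} (hd : 0 < -(α + β))
    (hΔ : 0 < (c ^ 2 + (α + β) ^ 2) * (α * β) - γ * (α + β) ^ 2) {z : ℂ}
    (hz : (z - α + I * c) * (z - β) = γ) : z.re < 0 := by
  by_contra! hx
  exact (stabilityResolvent_pos hd hΔ hx).ne' (stabilityResolvent_eq_zero hz)

theorem Matrix.det_sub_smul_one_eq_zero {K n : Type*} [Field K] [Fintype n] [DecidableEq n]
    {A : Matrix n n K} {lam : K} {v : n → K} (hv : v ≠ 0) (hAv : A.mulVec v = lam • v) :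
    (A - lam • 1).det = 0 := by
  rw [← Matrix.exists_mulVec_eq_zero_iff]
  exact ⟨v, hv, by rw [Matrix.sub_mulVec, Matrix.smul_mulVec, Matrix.one_mulVec, hAv, sub_self]⟩

/-- If Δ2 > 0 and Δ4 > 0, every eigenvalue of the 2×2 stability matrix has
negative real part (all normal modes stable). -/
theorem stmt_1 (mu de ch c a11 a12 a21 a22 : ℝ)
    (hΔ2 : 0 < mu + de - a11 - a22)
    (hΔ4 : 0 < (c ^ 2 + (mu + de - a11 - a22) ^ 2) * ((de - a22) * (mu - a11))
              - a21 * (mu + de - a11 - a22) ^ 2 * (a12 + ch)) :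
    let A : Matrix (Fin 2) (Fin 2) ℂ :=
      !![(a11 : ℂ) - (mu : ℂ) - Complex.I * (c : ℂ), (a12 : ℂ) + (ch : ℂ);
         (a21 : ℂ), (a22 : ℂ) - (de : ℂ)]
    ∀ (lam : ℂ) (v : Fin 2 → ℂ), v ≠ 0 → A.mulVec v = lam • v → lam.re < 0 := by
  intro A lam v hv hAv
  have hdet := Matrix.det_sub_smul_one_eq_zero hv hAv
  simp only [A, Matrix.det_fin_two, Matrix.sub_apply, Matrix.of_apply, Matrix.cons_val',
    Matrix.cons_val_zero, Matrix.cons_val_one, Matrix.cons_val_fin_one, Matrix.smul_apply,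
    Matrix.one_apply_eq, Matrix.one_apply_ne, zero_ne_one, one_ne_zero, ne_eq, not_false_eq_true,
    smul_eq_mul, mul_one, mul_zero, sub_zero] at hdet
  refine re_neg_of_mul_eq (α := a11 - mu) (β := a22 - de) (γ := a21 * (a12 + ch)) (c := c)
    (by linarith) (by convert hΔ4 using 1; ring) ?_
  push_cast
  linear_combination hdet
end

section
/- Let μ̂, δ̂, χ̂, ĉ, a11, a12, a21, a22 be real numbers. Consider the 2×2 complex matrix A with rows (a11 − μ̂ − i·ĉ, a12 + χ̂) and (a21, a22 − δ̂). Set Δ2 = μ̂ + δ̂ − a11 − a22 and Δ4 = (ĉ² + Δ2²)(δ̂ − a22)(μ̂ − a11) − a21·Δ2²·(a12 + χ̂). If Δ4 < 0, then A has an eigenvalue λ ∈ ℂ (i.e., A·v = λ·v has a nonzero solution v ∈ ℂ²) with Re λ > 0. -/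
/-! Let `λ₁, λ₂` be the eigenvalues of `A` and write `tr A = λ₁ + λ₂ = X + iY`,
`det A = λ₁ λ₂ = P + iQ`. Then `Δ4 = X²P + XYQ - Q² = Re λ₁ · Re λ₂ · (X² + (Im λ₁ - Im λ₂)²)`,
so `Δ4 < 0` forces the real parts of the two eigenvalues to have opposite signs. -/

open Polynomial in
theorem IsAlgClosed.exists_add_eq_and_mul_eq {K : Type*} [Field K] [IsAlgClosed K] (s p : K) :
    ∃ x y : K, x + y = s ∧ x * y = p := by
  obtain ⟨x, hx⟩ := IsAlgClosed.exists_root (C 1 * X ^ 2 + C (-s) * X + C p)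
    (by rw [degree_quadratic one_ne_zero]; decide)
  refine ⟨x, s - x, add_sub_cancel x s, ?_⟩
  simp only [IsRoot, eval_add, eval_mul, eval_C, eval_pow, eval_X] at hx
  linear_combination -hx

namespace Matrix

theorem det_sub_smul_one_fin_two {R : Type*} [CommRing R] (A : Matrix (Fin 2) (Fin 2) R) (l : R) :
    (A - l • 1).det = l ^ 2 - A.trace * l + A.det := by
  simp only [det_fin_two, trace_fin_two, sub_apply, smul_apply, one_apply_eq, smul_eq_mul,
    one_apply_ne zero_ne_one, one_apply_ne one_ne_zero]
  ring

theorem exists_mulVec_eq_smul_of_det_sub_smul_one_eq_zero {n K : Type*} [Fintype n] [DecidableEq n]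
    [Field K] (A : Matrix n n K) {l : K} (h : (A - l • 1).det = 0) :
    ∃ v ≠ 0, A *ᵥ v = l • v := by
  obtain ⟨v, hv, hAv⟩ := exists_mulVec_eq_zero_iff.mpr h
  refine ⟨v, hv, ?_⟩
  rwa [sub_mulVec, smul_mulVec, one_mulVec, sub_eq_zero] at hAv

theorem exists_mulVec_eq_smul_fin_two {K : Type*} [Field K] (A : Matrix (Fin 2) (Fin 2) K)
    {l₁ l₂ : K} (htr : l₁ + l₂ = A.trace) (hdet : l₁ * l₂ = A.det) :
    ∃ v ≠ 0, A *ᵥ v = l₁ • v := by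
  refine A.exists_mulVec_eq_smul_of_det_sub_smul_one_eq_zero ?_
  rw [det_sub_smul_one_fin_two, ← htr, ← hdet]
  ring

end Matrix

theorem Complex.re_mul_re_mul_eq (z w : ℂ) :
    z.re * w.re * ((z + w).re ^ 2 + (z.im - w.im) ^ 2) =
      (z + w).re ^ 2 * (z * w).re + (z + w).re * (z + w).im * (z * w).im - (z * w).im ^ 2 := by
  simp only [add_re, add_im, mul_re, mul_im]
  ring

theorem Complex.re_pos_or_re_pos_of_neg {z w : ℂ}
    (h : (z + w).re ^ 2 * (z * w).re + (z + w).re * (z + w).im * (z * w).im - (z * w).im ^ 2 < 0) :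
    0 < z.re ∨ 0 < w.re := by
  have hneg : z.re * w.re < 0 := by
    rw [← re_mul_re_mul_eq] at h
    exact neg_of_mul_neg_left h (by positivity)
  exact (mul_neg_iff.mp hneg).imp And.left And.right

/-- If Δ4 < 0, the 2×2 stability matrix has an eigenvalue with positive real part
(an unstable normal mode). -/
theorem stmt_2 (mu de ch c a11 a12 a21 a22 : ℝ)
    (hΔ4 : (c ^ 2 + (mu + de - a11 - a22) ^ 2) * ((de - a22) * (mu - a11))
              - a21 * (mu + de - a11 - a22) ^ 2 * (a12 + ch) < 0) :
    let A : Matrix (Fin 2) (Fin 2) ℂ :=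
      !![(a11 : ℂ) - (mu : ℂ) - Complex.I * (c : ℂ), (a12 : ℂ) + (ch : ℂ);
         (a21 : ℂ), (a22 : ℂ) - (de : ℂ)]
    ∃ (lam : ℂ) (v : Fin 2 → ℂ), v ≠ 0 ∧ A.mulVec v = lam • v ∧ 0 < lam.re := by
  intro A
  obtain ⟨l₁, l₂, htr, hdet⟩ := IsAlgClosed.exists_add_eq_and_mul_eq A.trace A.det
  have hA : A.trace.re ^ 2 * A.det.re + A.trace.re * A.trace.im * A.det.im - A.det.im ^ 2 < 0 := by
    simp only [A, Matrix.trace_fin_two_of, Matrix.det_fin_two_of, Complex.add_re, Complex.sub_re,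
      Complex.mul_re, Complex.add_im, Complex.sub_im, Complex.mul_im, Complex.ofReal_re,
      Complex.ofReal_im, Complex.I_re, Complex.I_im]
    linear_combination hΔ4
  rw [← htr, ← hdet] at hA
  rcases Complex.re_pos_or_re_pos_of_neg hA with hre | hre
  · obtain ⟨v, hv, hAv⟩ := A.exists_mulVec_eq_smul_fin_two htr hdet
    exact ⟨l₁, v, hv, hAv, hre⟩
  · obtain ⟨v, hv, hAv⟩ :=
      A.exists_mulVec_eq_smul_fin_two (add_comm l₁ l₂ ▸ htr) (mul_comm l₁ l₂ ▸ hdet)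
    exact ⟨l₂, v, hv, hAv, hre⟩
end

section
/- Let μ̂, δ̂, χ̂, ĉ, a11, a12, a21, a22 be real numbers with a11 ≤ 0, a22 ≤ 0, a21 ≤ 0, a12 ≥ 0, μ̂ > 0, χ̂ ≥ 0, δ̂ ≥ 0, and δ̂ − a22 > 0. Then every eigenvalue λ ∈ ℂ of the 2×2 complex matrix A with rows (a11 − μ̂ − i·ĉ, a12 + χ̂) and (a21, a22 − δ̂) satisfies Re λ < 0. -/
/-!
An eigenvalue `λ` of a `2 × 2` matrix satisfies `(λ - A₀₀)(λ - A₁₁) = A₀₁ A₁₀`. Under the sign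
conditions the right-hand side is a nonpositive real number, while if `Re λ ≥ 0` both factors on
the left lie in the open right half-plane, and a product of two such numbers never lies on the
ray `(-∞, 0]`.
-/

open Complex Matrix

lemma Matrix.sub_diag_mul_sub_diag_eq_of_mulVec_eq_smul {K : Type*} [Field K]
    (A : Matrix (Fin 2) (Fin 2) K) {lam : K} {v : Fin 2 → K} (hv : v ≠ 0)
    (hAv : A *ᵥ v = lam • v) :
    (lam - A 0 0) * (lam - A 1 1) = A 0 1 * A 1 0 := by
  have hker : (lam • (1 : Matrix (Fin 2) (Fin 2) K) - A) *ᵥ v = 0 := by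
    rw [sub_mulVec, smul_mulVec, one_mulVec, hAv, sub_self]
  have hdet := exists_mulVec_eq_zero_iff.mp ⟨v, hv, hker⟩
  rw [det_fin_two] at hdet
  simp only [sub_apply, smul_apply, one_apply_eq, one_apply_ne, ne_eq, zero_ne_one,
    one_ne_zero, not_false_eq_true, smul_eq_mul, mul_one, mul_zero] at hdet
  linear_combination hdet

lemma Complex.mul_mem_slitPlane_of_re_pos {p q : ℂ} (hp : 0 < p.re) (hq : 0 < q.re) :
    p * q ∈ slitPlane := by
  rw [mem_slitPlane_iff]
  by_cases him : (p * q).im = 0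
  · left
    rw [mul_im] at him
    have hre : p.re * (p * q).re = q.re * (p.re ^ 2 + p.im ^ 2) := by
      rw [mul_re]; linear_combination (-p.im) * him
    have : 0 < p.re * (p * q).re := by rw [hre]; positivity
    exact pos_of_mul_pos_right this hp.le
  · exact Or.inr him

lemma Complex.re_neg_of_sub_mul_sub_eq_nonpos {lam d₁ d₂ : ℂ} {r : ℝ}
    (hd₁ : d₁.re < 0) (hd₂ : d₂.re < 0) (hr : r ≤ 0) (h : (lam - d₁) * (lam - d₂) = r) :
    lam.re < 0 := by
  by_contra! hlam
  have hmem := mul_mem_slitPlane_of_re_pos (p := lam - d₁) (q := lam - d₂)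
    (by rw [sub_re]; linarith) (by rw [sub_re]; linarith)
  rw [h, ofReal_mem_slitPlane] at hmem
  linarith

theorem stmt_3_general (mu de ch c a11 a12 a21 a22 : ℝ)
    (ha11 : a11 ≤ 0) (ha21 : a21 ≤ 0) (ha12 : 0 ≤ a12)
    (hmu : 0 < mu) (hch : 0 ≤ ch) (hde22 : 0 < de - a22) :
    let A : Matrix (Fin 2) (Fin 2) ℂ :=
      !![(a11 : ℂ) - (mu : ℂ) - Complex.I * (c : ℂ), (a12 : ℂ) + (ch : ℂ);
         (a21 : ℂ), (a22 : ℂ) - (de : ℂ)]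
    ∀ (lam : ℂ) (v : Fin 2 → ℂ), v ≠ 0 → A.mulVec v = lam • v → lam.re < 0 := by
  intro A lam v hv hAv
  have hchar := A.sub_diag_mul_sub_diag_eq_of_mulVec_eq_smul hv hAv
  simp only [A, of_apply, cons_val', cons_val_zero, cons_val_one, empty_val',
    cons_val_fin_one] at hchar
  refine re_neg_of_sub_mul_sub_eq_nonpos (r := (a12 + ch) * a21) ?_ ?_
    (mul_nonpos_of_nonneg_of_nonpos (by linarith) ha21) (by push_cast; exact hchar)
  · simp only [sub_re, ofReal_re, mul_re, I_re, I_im, ofReal_im]; linarith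
  · simp only [sub_re, ofReal_re]; linarith

/-- Under the sign conditions a11 ≤ 0, a22 ≤ 0, a21 ≤ 0, a12 ≥ 0 (and positive
diffusivities), every eigenvalue of the 2×2 stability matrix has negative real part. -/
theorem stmt_3 (mu de ch c a11 a12 a21 a22 : ℝ)
    (ha11 : a11 ≤ 0) (ha22 : a22 ≤ 0) (ha21 : a21 ≤ 0) (ha12 : 0 ≤ a12)
    (hmu : 0 < mu) (hch : 0 ≤ ch) (hde : 0 ≤ de) (hde22 : 0 < de - a22) :
    let A : Matrix (Fin 2) (Fin 2) ℂ :=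
      !![(a11 : ℂ) - (mu : ℂ) - Complex.I * (c : ℂ), (a12 : ℂ) + (ch : ℂ);
         (a21 : ℂ), (a22 : ℂ) - (de : ℂ)]
    ∀ (lam : ℂ) (v : Fin 2 → ℂ), v ≠ 0 → A.mulVec v = lam • v → lam.re < 0 :=
  stmt_3_general mu de ch c a11 a12 a21 a22 ha11 ha21 ha12 hmu hch hde22
end

section
/- Let e : ℝ → ℝ be continuously differentiable, 1-periodic, and everywhere positive, and let u : ℝ → ℝ be 1-periodic and such that x ↦ u(x)/e(x) is differentiable and x ↦ e(x)·(d/dx)(u/e)(x) is differentiable with (d/dx)[e·(d/dx)(u/e)](x) = e'(x) for all x ∈ ℝ. Then for all x ∈ ℝ, (d/dx)(u/e)(x) = 1 − 1/(e(x)·∫₀¹ (1/e(y)) dy). -/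
/-!
Integrating the equation once gives `e (u/e)' = e + C`, i.e. `(u/e)' = 1 + C / e`.
Since `u/e` is `1`-periodic, its derivative has mean zero over a period, so
`0 = 1 + C ∫₀¹ 1/e`, which fixes `C = -1 / ∫₀¹ 1/e`.
-/

open MeasureTheory

theorem exists_mul_deriv_eq_add_const {e φ : ℝ → ℝ} (he : Differentiable ℝ e)
    (hψ : Differentiable ℝ (fun x => e x * deriv φ x))
    (hode : ∀ x, deriv (fun y => e y * deriv φ y) x = deriv e x) :
    ∃ C, ∀ x, e x * deriv φ x = e x + C := by
  obtain ⟨C, hC⟩ := isOpen_univ.exists_eq_add_of_deriv_eq isPreconnected_univ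
    hψ.differentiableOn he.differentiableOn fun x _ => hode x
  exact ⟨C, fun x => hC (Set.mem_univ x)⟩

theorem Function.Periodic.intervalIntegral_deriv_eq_zero {E : Type*} [NormedAddCommGroup E]
    [NormedSpace ℝ E] [CompleteSpace E] {f : ℝ → E} {T : ℝ} (hf : Function.Periodic f T)
    (hd : Differentiable ℝ f) (hint : IntervalIntegrable (deriv f) volume 0 T) :
    ∫ x in (0:ℝ)..T, deriv f x = 0 := by
  rw [intervalIntegral.integral_deriv_eq_sub (fun x _ => hd x) hint, ← zero_add T, hf 0,
    sub_self]

theorem deriv_eq_one_sub_one_div_of_periodic {e φ : ℝ → ℝ} (he : Continuous e)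
    (hepos : ∀ x, 0 < e x) (hφper : Function.Periodic φ 1) (hφ : Differentiable ℝ φ)
    {C : ℝ} (hφ' : ∀ x, deriv φ x = 1 + C / e x) (x : ℝ) :
    deriv φ x = 1 - 1 / (e x * ∫ y in (0:ℝ)..1, 1 / e y) := by
  have hinv : Continuous fun y => 1 / e y := continuous_const.div he fun y => (hepos y).ne'
  set I := ∫ y in (0:ℝ)..1, 1 / e y
  have hI : 0 < I := intervalIntegral.intervalIntegral_pos_of_pos
    (hinv.intervalIntegrable 0 1) (fun y => one_div_pos.mpr (hepos y)) one_pos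
  have hderiv : deriv φ = fun y => 1 + C * (1 / e y) := by
    funext y
    rw [hφ', mul_one_div]
  have hint : IntervalIntegrable (deriv φ) volume 0 1 := by
    rw [hderiv]
    exact (continuous_const.add (continuous_const.mul hinv)).intervalIntegrable 0 1
  have hmean : 1 + C * I = 0 := calc
    1 + C * I = ∫ y in (0:ℝ)..1, deriv φ y := by
      rw [hderiv, intervalIntegral.integral_add (f := fun _ => 1) (g := fun y => C * (1 / e y))
        intervalIntegrable_const ((continuous_const.mul hinv).intervalIntegrable 0 1),
        intervalIntegral.integral_const_mul]
      simp [I]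
    _ = 0 := hφper.intervalIntegral_deriv_eq_zero hφ hint
  have hC : C = -1 / I := by
    field_simp [hI.ne']
    linarith
  rw [hφ', hC]
  field_simp [(hepos x).ne']
  ring

/-- The 1D cell problem: if e is C¹, 1-periodic, positive, u is 1-periodic, u/e is
differentiable and (e·(u/e)')' = e', then (u/e)' = 1 − 1/(e·∫₀¹(1/e)). -/
theorem stmt_8 (e u : ℝ → ℝ)
    (he : ContDiff ℝ 1 e) (heper : ∀ x, e (x + 1) = e x) (hepos : ∀ x, 0 < e x)
    (huper : ∀ x, u (x + 1) = u x)
    (hφ : Differentiable ℝ (fun x => u x / e x))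
    (hψ : Differentiable ℝ (fun x => e x * deriv (fun z => u z / e z) x))
    (hode : ∀ x, deriv (fun y => e y * deriv (fun z => u z / e z) y) x = deriv e x) :
    ∀ x, deriv (fun z => u z / e z) x = 1 - 1 / (e x * ∫ y in (0:ℝ)..1, 1 / e y) := by
  have hφper : Function.Periodic (fun z => u z / e z) 1 :=
    Function.Periodic.div huper heper
  obtain ⟨C, hC⟩ := exists_mul_deriv_eq_add_const (he.differentiable one_ne_zero) hψ hode
  have hφ' : ∀ x, deriv (fun z => u z / e z) x = 1 + C / e x := fun x => by
    field_simp [(hepos x).ne']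
    linarith [hC x]
  exact deriv_eq_one_sub_one_div_of_periodic he.continuous hepos hφper hφ hφ'
end

section
/- Let n ≥ 1, let ℓ₁, …, ℓₙ be positive reals, and let e : ℝⁿ → ℝ be C^∞, everywhere positive, and periodic with period ℓᵢ in the i-th coordinate. If u : ℝⁿ → ℝ is C^∞, periodic with the same periods, and satisfies Δu(ξ) + ∇u(ξ)·∇(ln e)(ξ) = 0 for all ξ ∈ ℝⁿ (where Δ is the Laplacian and ∇ the gradient), then u is constant. -/
open MeasureTheory Function Set

section Aux

variable {n : ℕ}

/-- The coordinate slice of a differentiable function has a derivative given by the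
partial derivative. -/
lemma hasDerivAt_slice (f : (Fin n → ℝ) → ℝ) (hf : Differentiable ℝ f)
    (ξ : Fin n → ℝ) (i : Fin n) (r : ℝ) :
    HasDerivAt (fun s => f (Function.update ξ i s))
      (fderiv ℝ f (Function.update ξ i r) (Pi.single i 1)) r := by
  have hupd : (fun s : ℝ => Function.update ξ i s)
      = fun s => (ξ - ξ i • (Pi.single i 1 : Fin n → ℝ)) + s • (Pi.single i 1 : Fin n → ℝ) := by
    funext s
    funext j
    by_cases h : j = i
    · subst h; simp
    · simp [Function.update_of_ne h, Pi.single_eq_of_ne h]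
  have h1 : HasDerivAt (fun s : ℝ => Function.update ξ i s)
      (Pi.single i 1 : Fin n → ℝ) r := by
    rw [hupd]
    simpa using ((hasDerivAt_id r).smul_const (Pi.single i 1 : Fin n → ℝ)).const_add
      (ξ - ξ i • (Pi.single i 1 : Fin n → ℝ))
  simpa [Function.comp_def] using (hf (Function.update ξ i r)).hasFDerivAt.comp_hasDerivAt r h1

lemma deriv_slice (f : (Fin n → ℝ) → ℝ) (hf : Differentiable ℝ f)
    (ξ : Fin n → ℝ) (i : Fin n) :
    deriv (fun s => f (Function.update ξ i s)) (ξ i) = fderiv ℝ f ξ (Pi.single i 1) := by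
  have := (hasDerivAt_slice f hf ξ i (ξ i)).deriv
  rwa [Function.update_eq_self] at this

/-- Translation invariance of the derivative of a periodic function. -/
lemma fderiv_shift (f : (Fin n → ℝ) → ℝ) (hf : Differentiable ℝ f) (p : Fin n → ℝ)
    (hp : ∀ y, f (y + p) = f y) (x : Fin n → ℝ) :
    fderiv ℝ f (x + p) = fderiv ℝ f x := by
  have h1 : HasFDerivAt (fun y : Fin n → ℝ => f (y + p)) (fderiv ℝ f (x + p)) x := by
    simpa [Function.comp_def] using (hf (x + p)).hasFDerivAt.comp x ((hasFDerivAt_id x).add_const p)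
  have h2 : (fun y : Fin n → ℝ => f (y + p)) = f := funext hp
  rw [h2] at h1
  exact h1.fderiv.symm

/-- Every coordinate slice of a fully periodic function is periodic. -/
lemma slice_periodic (ℓ : Fin n → ℝ) (f : (Fin n → ℝ) → ℝ)
    (hper : ∀ (x : Fin n → ℝ) (i : Fin n), f (x + Pi.single i (ℓ i)) = f x)
    (x : Fin n → ℝ) (i : Fin n) :
    Function.Periodic (fun r => f (Function.update x i r)) (ℓ i) := by
  intro r
  have h : Function.update x i (r + ℓ i) = Function.update x i r + Pi.single i (ℓ i) := by
    funext j
    by_cases hj : j = i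
    · subst hj; simp
    · simp [Function.update_of_ne hj, Pi.single_eq_of_ne hj]
  simp only [h, hper]

/-- A fully periodic function takes the same value at the canonical representative in the
fundamental cell. -/
lemma periodic_reduce (ℓ : Fin n → ℝ) (f : (Fin n → ℝ) → ℝ)
    (hper : ∀ (x : Fin n → ℝ) (i : Fin n), f (x + Pi.single i (ℓ i)) = f x)
    (x : Fin n → ℝ) :
    f (fun j => x j - ⌊x j / ℓ j⌋ * ℓ j) = f x := by
  classical
  have claim : ∀ s : Finset (Fin n),
      f (fun j => if j ∈ s then x j - ⌊x j / ℓ j⌋ * ℓ j else x j) = f x := by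
    intro s
    induction s using Finset.induction with
    | empty => simp
    | @insert i s hi ih =>
      set y : Fin n → ℝ := fun j => if j ∈ s then x j - ⌊x j / ℓ j⌋ * ℓ j else x j with hy
      have hnew : (fun j => if j ∈ insert i s then x j - ⌊x j / ℓ j⌋ * ℓ j else x j)
          = Function.update y i (x i - ⌊x i / ℓ i⌋ * ℓ i) := by
        funext j
        by_cases hj : j = i
        · subst hj; simp [hi]
        · rw [Function.update_of_ne hj]
          simp [hy, Finset.mem_insert, hj]
      have hyi : y i = x i := by simp [hy, hi]
      have hps := (slice_periodic ℓ f hper y i).sub_int_mul_eq (x := x i) ⌊x i / ℓ i⌋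
      rw [hnew]
      calc f (Function.update y i (x i - ⌊x i / ℓ i⌋ * ℓ i)) = f (Function.update y i (x i)) := hps
        _ = f y := by rw [← hyi, Function.update_eq_self]
        _ = f x := ih
  have := claim Finset.univ
  simpa using this

end Aux

/-- A smooth periodic solution of Δu + ∇u·∇(ln e) = 0 on the torus is constant
(kernel of the adjoint cell operator, strong maximum principle). -/
theorem stmt_12 (n : ℕ) (hn : 1 ≤ n) (ℓ : Fin n → ℝ) (hℓ : ∀ i, 0 < ℓ i)
    (e : (Fin n → ℝ) → ℝ) (he : ContDiff ℝ (⊤ : ℕ∞) e) (hepos : ∀ ξ, 0 < e ξ)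
    (heper : ∀ (ξ : Fin n → ℝ) (i : Fin n), e (ξ + Pi.single i (ℓ i)) = e ξ)
    (u : (Fin n → ℝ) → ℝ) (hu : ContDiff ℝ (⊤ : ℕ∞) u)
    (huper : ∀ (ξ : Fin n → ℝ) (i : Fin n), u (ξ + Pi.single i (ℓ i)) = u ξ)
    (hpde : ∀ ξ : Fin n → ℝ,
      (∑ i, deriv (fun s => deriv (fun r => u (Function.update ξ i r)) s) (ξ i)) +
      (∑ i, deriv (fun r => u (Function.update ξ i r)) (ξ i) *
            deriv (fun r => Real.log (e (Function.update ξ i r))) (ξ i)) = 0) :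
    ∀ ξ η : Fin n → ℝ, u ξ = u η := by
  obtain ⟨m, rfl⟩ : ∃ m, n = m + 1 := ⟨n - 1, by omega⟩
  have hud : Differentiable ℝ u := hu.differentiable (by simp)
  have hed : Differentiable ℝ e := he.differentiable (by simp)
  -- partial derivatives of u
  set g : Fin (m + 1) → (Fin (m + 1) → ℝ) → ℝ :=
    fun i x => fderiv ℝ u x (Pi.single i 1) with hg_def
  have hg : ∀ i, ContDiff ℝ (⊤ : ℕ∞) (g i) := fun i =>
    (hu.fderiv_right (by simp)).clm_apply contDiff_const
  have hgd : ∀ i, Differentiable ℝ (g i) := fun i => (hg i).differentiable (by simp)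
  -- periodicity of the partial derivatives
  have hgper : ∀ i (x : Fin (m + 1) → ℝ) (j : Fin (m + 1)),
      g i (x + Pi.single j (ℓ j)) = g i x := by
    intro i x j
    simp only [hg_def]
    rw [fderiv_shift u hud _ (fun y => huper y j) x]
  -- translate the PDE
  have hpde' : ∀ ξ, (∑ i, fderiv ℝ (g i) ξ (Pi.single i 1)) +
      (∑ i, g i ξ * (fderiv ℝ e ξ (Pi.single i 1) / e ξ)) = 0 := by
    intro ξ
    have h1 : ∀ i, deriv (fun s => deriv (fun r => u (Function.update ξ i r)) s) (ξ i)
        = fderiv ℝ (g i) ξ (Pi.single i 1) := by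
      intro i
      have heq : (fun s => deriv (fun r => u (Function.update ξ i r)) s)
          = fun s => g i (Function.update ξ i s) := by
        funext s
        have := (hasDerivAt_slice u hud ξ i s).deriv
        simpa [hg_def] using this
      rw [heq, deriv_slice (g i) (hgd i) ξ i]
    have h2 : ∀ i, deriv (fun r => u (Function.update ξ i r)) (ξ i) = g i ξ :=
      fun i => deriv_slice u hud ξ i
    have h3 : ∀ i, deriv (fun r => Real.log (e (Function.update ξ i r))) (ξ i)
        = fderiv ℝ e ξ (Pi.single i 1) / e ξ := by
      intro i
      have h := hasDerivAt_slice e hed ξ i (ξ i)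
      rw [Function.update_eq_self] at h
      have hne : e (Function.update ξ i (ξ i)) ≠ 0 := by
        rw [Function.update_eq_self]; exact (hepos ξ).ne'
      have := (h.log (by rw [Function.update_eq_self] at hne ⊢; exact hne)).deriv
      simpa using this
    have := hpde ξ
    simp only [h1, h2, h3] at this
    exact this
  -- divergence-free form: ∑ᵢ ∂ᵢ (e ∇u)ᵢ = 0
  have hdiv0 : ∀ ξ, ∑ i, fderiv ℝ (fun x => e x * g i x) ξ (Pi.single i 1) = 0 := by
    intro ξ
    have hterm : ∀ i, fderiv ℝ (fun x => e x * g i x) ξ (Pi.single i 1)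
        = e ξ * fderiv ℝ (g i) ξ (Pi.single i 1) + g i ξ * fderiv ℝ e ξ (Pi.single i 1) := by
      intro i
      rw [fderiv_fun_mul (hed ξ) ((hgd i) ξ)]
      simp [ContinuousLinearMap.add_apply, ContinuousLinearMap.smul_apply, smul_eq_mul]
    calc ∑ i, fderiv ℝ (fun x => e x * g i x) ξ (Pi.single i 1)
        = e ξ * ((∑ i, fderiv ℝ (g i) ξ (Pi.single i 1)) +
            (∑ i, g i ξ * (fderiv ℝ e ξ (Pi.single i 1) / e ξ))) := by
          simp only [hterm]
          rw [Finset.sum_add_distrib, mul_add, Finset.mul_sum, Finset.mul_sum]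
          congr 1
          refine Finset.sum_congr rfl fun i _ => ?_
          rw [mul_comm (e ξ), mul_assoc, div_mul_cancel₀ _ (hepos ξ).ne']
      _ = 0 := by rw [hpde' ξ, mul_zero]
  -- the vector field F = u · e · ∇u
  set F : (Fin (m + 1) → ℝ) → (Fin (m + 1) → ℝ) :=
    fun x i => u x * (e x * g i x) with hF_def
  have hFc : ∀ i, ContDiff ℝ (⊤ : ℕ∞) (fun x => F x i) := fun i => hu.mul (he.mul (hg i))
  have hF : ContDiff ℝ (⊤ : ℕ∞) F := contDiff_pi.mpr hFc
  have hFd : Differentiable ℝ F := hF.differentiable (by simp)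
  -- divergence of F equals e |∇u|²
  have hdivF : ∀ ξ, ∑ i, fderiv ℝ F ξ (Pi.single i 1) i = e ξ * ∑ i, (g i ξ)^2 := by
    intro ξ
    have hcomp : ∀ (v : Fin (m+1) → ℝ) i, fderiv ℝ F ξ v i
        = fderiv ℝ (fun x => F x i) ξ v := by
      intro v i
      rw [fderiv_pi (fun i => ((hFc i).differentiable (by simp)) ξ)]
      rfl
    have hterm : ∀ i, fderiv ℝ (fun x => F x i) ξ (Pi.single i 1)
        = g i ξ * (e ξ * g i ξ) + u ξ * fderiv ℝ (fun x => e x * g i x) ξ (Pi.single i 1) := by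
      intro i
      rw [show (fun x => F x i) = fun x => u x * (e x * g i x) from rfl,
        fderiv_fun_mul (hud ξ) (show DifferentiableAt ℝ (fun x => e x * g i x) ξ from (hed.mul (hgd i)) ξ)]
      simp only [ContinuousLinearMap.add_apply, ContinuousLinearMap.smul_apply, smul_eq_mul]
      ring
    calc ∑ i, fderiv ℝ F ξ (Pi.single i 1) i
        = ∑ i, (g i ξ * (e ξ * g i ξ) + u ξ * fderiv ℝ (fun x => e x * g i x) ξ (Pi.single i 1)) := by
          refine Finset.sum_congr rfl fun i _ => ?_
          rw [hcomp, hterm]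
      _ = (∑ i, e ξ * (g i ξ)^2) +
            u ξ * ∑ i, fderiv ℝ (fun x => e x * g i x) ξ (Pi.single i 1) := by
          rw [Finset.sum_add_distrib, ← Finset.mul_sum]
          congr 1
          exact Finset.sum_congr rfl fun i _ => by ring
      _ = e ξ * ∑ i, (g i ξ)^2 := by rw [hdiv0, mul_zero, add_zero, Finset.mul_sum]
  -- periodicity of F
  have hFper : ∀ (x : Fin (m + 1) → ℝ) (j : Fin (m + 1)),
      F (x + Pi.single j (ℓ j)) = F x := by
    intro x j
    funext i
    simp only [hF_def, huper, heper, hgper]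
  -- apply the divergence theorem on the box [0, ℓ]
  have hle : (0 : Fin (m + 1) → ℝ) ≤ ℓ := fun i => (hℓ i).le
  have hW : Continuous (fun x => e x * ∑ i, (g i x)^2) := by
    exact (he.continuous).mul (continuous_finset_sum _ fun i _ => ((hg i).continuous).pow 2)
  have hint := integral_divergence_of_hasFDerivAt_off_countable (a := 0) (b := ℓ) hle
    F (fun x => fderiv ℝ F x) ∅ Set.countable_empty (hF.continuous.continuousOn)
    (fun x _ => (hFd x).hasFDerivAt)
    (by
      have : (fun x => ∑ i, fderiv ℝ F x (Pi.single i 1) i)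
          = fun x => e x * ∑ i, (g i x)^2 := funext hdivF
      rw [show (fun x => ∑ i, (fderiv ℝ F x) (Pi.single i 1) i)
          = fun x => e x * ∑ i, (g i x)^2 from funext hdivF] at *
      exact hW.integrableOn_Icc)
  -- boundary terms vanish by periodicity; hence the energy integral vanishes
  have henergy : ∫ x in Icc (0 : Fin (m+1) → ℝ) ℓ, e x * ∑ i, (g i x)^2 = 0 := by
    rw [show (fun x => e x * ∑ i, (g i x)^2)
        = fun x => ∑ i, fderiv ℝ F x (Pi.single i 1) i from (funext hdivF).symm]
    rw [hint]
    refine Finset.sum_eq_zero fun i _ => sub_eq_zero.mpr ?_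
    have hins : ∀ x : Fin m → ℝ, (i.insertNth (ℓ i) x : Fin (m+1) → ℝ)
        = i.insertNth (0 : ℝ) x + Pi.single i (ℓ i) := by
      intro x
      funext j
      refine Fin.succAboveCases i ?_ ?_ j
      · simp
      · intro k
        simp [Fin.insertNth_apply_succAbove, Pi.single_eq_of_ne (Fin.succAbove_ne i k)]
    have hzi : (0 : Fin (m+1) → ℝ) i = (0 : ℝ) := rfl
    have hFF : ∀ x : Fin m → ℝ, F (i.insertNth (ℓ i) x) i
        = F (i.insertNth ((0 : Fin (m+1) → ℝ) i) x) i := by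
      intro x
      rw [hzi, hins x, hFper]
    simp only [hFF]
  -- the integrand is nonnegative and continuous, hence vanishes on the box
  have hWnonneg : ∀ x, 0 ≤ e x * ∑ i, (g i x)^2 := fun x =>
    mul_nonneg (hepos x).le (Finset.sum_nonneg fun i _ => sq_nonneg _)
  have hWzero : ∀ x ∈ Icc (0 : Fin (m+1) → ℝ) ℓ, e x * ∑ i, (g i x)^2 = 0 := by
    intro x₀ hx₀
    by_contra hne
    have hpos : 0 < e x₀ * ∑ i, (g i x₀)^2 := lt_of_le_of_ne (hWnonneg x₀) (Ne.symm hne)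
    have hsupp_open : IsOpen (Function.support fun x => e x * ∑ i, (g i x)^2) := by
      have : (Function.support fun x => e x * ∑ i, (g i x)^2)
          = (fun x => e x * ∑ i, (g i x)^2) ⁻¹' ({0}ᶜ) := rfl
      rw [this]
      exact (isOpen_compl_singleton).preimage hW
    -- the open box
    have hIcc_eq : Icc (0 : Fin (m+1) → ℝ) ℓ = Set.pi Set.univ fun i => Icc 0 (ℓ i) := by
      rw [Set.pi_univ_Icc]; rfl
    have hclosure : Icc (0 : Fin (m+1) → ℝ) ℓ
        = closure (Set.pi Set.univ fun i => Ioo 0 (ℓ i)) := by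
      rw [closure_pi_set, hIcc_eq]
      have : (fun i => Icc (0:ℝ) (ℓ i)) = fun i => closure (Ioo 0 (ℓ i)) :=
        funext fun i => (closure_Ioo (hℓ i).ne).symm
      rw [this]
    have hx₀cl : x₀ ∈ closure (Set.pi Set.univ fun i => Ioo 0 (ℓ i)) := hclosure ▸ hx₀
    obtain ⟨y, hy_supp, hy_box⟩ :
        ((Function.support fun x => e x * ∑ i, (g i x)^2) ∩
          Set.pi Set.univ fun i => Ioo 0 (ℓ i)).Nonempty := by
      have hx₀supp : x₀ ∈ Function.support fun x => e x * ∑ i, (g i x)^2 := hne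
      exact mem_closure_iff.mp hx₀cl _ hsupp_open hx₀supp
    have hopen : IsOpen ((Function.support fun x => e x * ∑ i, (g i x)^2) ∩
        Set.pi Set.univ fun i => Ioo 0 (ℓ i)) :=
      hsupp_open.inter (isOpen_set_pi Set.finite_univ fun i _ => isOpen_Ioo)
    have hmeas_pos : 0 < volume ((Function.support fun x => e x * ∑ i, (g i x)^2) ∩
        Icc (0 : Fin (m+1) → ℝ) ℓ) := by
      have hsub : ((Function.support fun x => e x * ∑ i, (g i x)^2) ∩
          Set.pi Set.univ fun i => Ioo 0 (ℓ i))
          ⊆ ((Function.support fun x => e x * ∑ i, (g i x)^2) ∩ Icc (0 : Fin (m+1) → ℝ) ℓ) := by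
        refine Set.inter_subset_inter_right _ ?_
        rw [hclosure]; exact subset_closure
      exact (hopen.measure_pos volume ⟨y, hy_supp, hy_box⟩).trans_le (measure_mono hsub)
    have hintpos : 0 < ∫ x in Icc (0 : Fin (m+1) → ℝ) ℓ, e x * ∑ i, (g i x)^2 := by
      refine (setIntegral_pos_iff_support_of_nonneg_ae ?_ ?_).mpr hmeas_pos
      · exact Filter.Eventually.of_forall fun x => hWnonneg x
      · exact hW.integrableOn_Icc
    rw [henergy] at hintpos
    exact lt_irrefl 0 hintpos
  -- therefore all partial derivatives vanish on the box, hence everywhere by periodicity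
  have hg_zero_box : ∀ x ∈ Icc (0 : Fin (m+1) → ℝ) ℓ, ∀ i, g i x = 0 := by
    intro x hx i
    have h0 : ∑ j, (g j x)^2 = 0 := by
      have := hWzero x hx
      have hepos' := (hepos x).ne'
      exact (mul_eq_zero.mp this).resolve_left hepos'
    have : (g i x)^2 = 0 := by
      have := (Finset.sum_eq_zero_iff_of_nonneg fun j _ => sq_nonneg (g j x)).mp h0
      exact this i (Finset.mem_univ i)
    exact pow_eq_zero_iff (by norm_num) |>.mp this
  have hg_zero : ∀ x, ∀ i, g i x = 0 := by
    intro x i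
    set y : Fin (m+1) → ℝ := fun j => x j - ⌊x j / ℓ j⌋ * ℓ j with hy_def
    have hy_mem : y ∈ Icc (0 : Fin (m+1) → ℝ) ℓ := by
      constructor <;> intro j
      · have h1 : y j = Int.fract (x j / ℓ j) * ℓ j := by
          simp only [hy_def, Int.fract, sub_mul, div_mul_cancel₀ _ (hℓ j).ne']
        rw [h1]
        exact mul_nonneg (Int.fract_nonneg _) (hℓ j).le
      · have h1 : y j = Int.fract (x j / ℓ j) * ℓ j := by
          simp only [hy_def, Int.fract, sub_mul, div_mul_cancel₀ _ (hℓ j).ne']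
        rw [h1]
        nlinarith [Int.fract_lt_one (x j / ℓ j), (hℓ j), Int.fract_nonneg (x j / ℓ j)]
    have := periodic_reduce ℓ (g i) (fun z j => hgper i z j) x
    rw [← this]
    exact hg_zero_box y hy_mem i
  -- hence fderiv u = 0 everywhere and u is constant
  have hfderiv0 : ∀ x, fderiv ℝ u x = 0 := by
    intro x
    ext v
    have hv : v = ∑ j, v j • (Pi.single j 1 : Fin (m+1) → ℝ) := by
      rw [show (fun j => v j • (Pi.single j 1 : Fin (m+1) → ℝ))
          = fun j => Pi.single j (v j) from funext fun j => by
            rw [← Pi.single_smul, smul_eq_mul, mul_one]]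
      exact (Finset.univ_sum_single v).symm
    rw [ContinuousLinearMap.zero_apply, hv, map_sum]
    refine Finset.sum_eq_zero fun j _ => ?_
    rw [(fderiv ℝ u x).map_smul]
    have := hg_zero x j
    simp only [hg_def] at this
    rw [this, smul_zero]
  intro ξ η
  exact is_const_of_fderiv_eq_zero hud hfderiv0 ξ η
end

section
/- Let n ≥ 1, let ℓ₁, …, ℓₙ be positive reals, and let e : ℝⁿ → ℝ be C^∞, everywhere positive, and periodic with period ℓᵢ in the i-th coordinate. If u : ℝⁿ → ℝ is C^∞, periodic with the same periods, and satisfies div(e·∇(u/e))(ξ) = 0 for all ξ ∈ ℝⁿ, then there exists c ∈ ℝ such that u(ξ) = c·e(ξ) for all ξ. -/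
open Function Set MeasureTheory

section auxlemmas
variable {n : ℕ}

lemma aux_partial (G : (Fin n → ℝ) → ℝ) (hG : Differentiable ℝ G)
    (ξ : Fin n → ℝ) (i : Fin n) (s : ℝ) :
    deriv (fun r => G (Function.update ξ i r)) s
      = fderiv ℝ G (Function.update ξ i s) (Pi.single i 1) :=
  ((hG _).hasFDerivAt.comp_hasDerivAt s (hasDerivAt_update ξ i s)).deriv

lemma aux_fderiv_shift (g : (Fin n → ℝ) → ℝ) (hg : Differentiable ℝ g)
    (c : Fin n → ℝ) (hgc : ∀ x, g (x + c) = g x) :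
    ∀ x, fderiv ℝ g (x + c) = fderiv ℝ g x := by
  intro x
  have h1 : HasFDerivAt (fun y => g (y + c)) (fderiv ℝ g (x + c)) x := by
    have := (hg (x + c)).hasFDerivAt.comp x ((hasFDerivAt_id x).add_const c)
    simp at this; exact this
  have h2 : (fun y => g (y + c)) = g := funext fun y => hgc y
  rw [h2] at h1
  exact h1.fderiv.symm

lemma aux_per {β : Type*} (ℓ : Fin n → ℝ) (P : (Fin n → ℝ) → β)
    (hP : ∀ x i, P (x + Pi.single i (ℓ i)) = P x) (k : Fin n → ℤ) (x : Fin n → ℝ) :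
    P (x + fun i => (k i : ℝ) * ℓ i) = P x := by
  have h1 : ∀ (z : ℤ) (x : Fin n → ℝ) (i : Fin n),
      P (x + Pi.single i ((z : ℝ) * ℓ i)) = P x := by
    intro z
    induction z using Int.induction_on with
    | zero => intro x i; simp
    | succ m ih =>
        intro x i
        have e1 : (((m : ℤ) + 1 : ℤ) : ℝ) * ℓ i = ((m : ℤ) : ℝ) * ℓ i + ℓ i := by
          push_cast; ring
        rw [e1, Pi.single_add, ← add_assoc, hP]
        exact ih x i
    | pred m ih =>
        intro x i
        have e1 : ((-(m : ℤ) - 1 : ℤ) : ℝ) * ℓ i = ((-(m : ℤ) : ℤ) : ℝ) * ℓ i - ℓ i := by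
          push_cast; ring
        rw [e1]
        have e2 : (x + Pi.single i (((-(m : ℤ) : ℤ) : ℝ) * ℓ i - ℓ i)) + Pi.single i (ℓ i)
            = x + Pi.single i (((-(m : ℤ) : ℤ) : ℝ) * ℓ i) := by
          rw [add_assoc, ← Pi.single_add, sub_add_cancel]
        calc P (x + Pi.single i (((-(m : ℤ) : ℤ) : ℝ) * ℓ i - ℓ i))
            = P ((x + Pi.single i (((-(m : ℤ) : ℤ) : ℝ) * ℓ i - ℓ i)) + Pi.single i (ℓ i)) :=
              (hP _ i).symm
          _ = P x := by rw [e2]; exact ih x i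
  have h2 : (fun i => (k i : ℝ) * ℓ i) = ∑ j, Pi.single j ((k j : ℝ) * ℓ j) := by
    funext i
    rw [Finset.sum_apply]
    exact (Fintype.sum_pi_single i (fun j => (k j : ℝ) * ℓ j)).symm
  rw [h2]
  have h3 : ∀ s : Finset (Fin n),
      P (x + ∑ j ∈ s, Pi.single j ((k j : ℝ) * ℓ j)) = P x := by
    intro s
    induction s using Finset.induction_on with
    | empty => simp
    | insert a s' hj ih =>
        rw [Finset.sum_insert hj]
        have h4 : x + (Pi.single a ((k a : ℝ) * ℓ a) + ∑ j ∈ s', Pi.single j ((k j : ℝ) * ℓ j))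
            = (x + ∑ j ∈ s', Pi.single j ((k j : ℝ) * ℓ j)) + Pi.single a ((k a : ℝ) * ℓ a) := by
          abel
        rw [h4, h1, ih]
  exact h3 Finset.univ

end auxlemmas

/-- Kernel statement of Proposition 1: a smooth periodic solution of
div(e·∇(u/e)) = 0 on the torus is a constant multiple of e. -/
theorem stmt_13 (n : ℕ) (hn : 1 ≤ n) (ℓ : Fin n → ℝ) (hℓ : ∀ i, 0 < ℓ i)
    (e : (Fin n → ℝ) → ℝ) (he : ContDiff ℝ (⊤ : ℕ∞) e) (hepos : ∀ ξ, 0 < e ξ)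
    (heper : ∀ (ξ : Fin n → ℝ) (i : Fin n), e (ξ + Pi.single i (ℓ i)) = e ξ)
    (u : (Fin n → ℝ) → ℝ) (hu : ContDiff ℝ (⊤ : ℕ∞) u)
    (huper : ∀ (ξ : Fin n → ℝ) (i : Fin n), u (ξ + Pi.single i (ℓ i)) = u ξ)
    (hpde : ∀ ξ : Fin n → ℝ,
      ∑ i, deriv (fun s => e (Function.update ξ i s) *
            deriv (fun r => u (Function.update ξ i r) / e (Function.update ξ i r)) s)
          (ξ i) = 0) :
    ∃ c : ℝ, ∀ ξ : Fin n → ℝ, u ξ = c * e ξ := by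
  obtain ⟨m, rfl⟩ : ∃ m, n = m + 1 := ⟨n - 1, by omega⟩
  have hene : ∀ ξ, e ξ ≠ 0 := fun ξ => (hepos ξ).ne'
  -- the quotient w = u / e
  obtain ⟨w, hw⟩ : ∃ w : (Fin (m+1) → ℝ) → ℝ, ∀ ξ, w ξ = u ξ / e ξ := ⟨_, fun _ => rfl⟩
  have hw_eq : w = fun ξ => u ξ / e ξ := funext hw
  have hwsm : ContDiff ℝ (⊤ : ℕ∞) w := by rw [hw_eq]; exact hu.div he hene
  have hwd : Differentiable ℝ w := hwsm.differentiable (by simp)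
  have hwper : ∀ ξ i, w (ξ + Pi.single i (ℓ i)) = w ξ := by
    intro ξ i; rw [hw, hw, huper, heper]
  have hWsm : ContDiff ℝ (⊤ : ℕ∞) (fderiv ℝ w) := hwsm.fderiv_right (by simp)
  have hWper : ∀ (ξ : Fin (m+1) → ℝ) (i : Fin (m+1)),
      fderiv ℝ w (ξ + Pi.single i (ℓ i)) = fderiv ℝ w ξ :=
    fun ξ i => aux_fderiv_shift w hwd _ (fun x => hwper x i) ξ
  -- the flux components F i = e * ∂ᵢ w
  obtain ⟨F, hF⟩ : ∃ F : Fin (m+1) → (Fin (m+1) → ℝ) → ℝ,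
      ∀ i ξ, F i ξ = e ξ * fderiv ℝ w ξ (Pi.single i 1) := ⟨_, fun _ _ => rfl⟩
  have hF_eq : ∀ i, F i = fun ξ => e ξ * fderiv ℝ w ξ (Pi.single i 1) :=
    fun i => funext (hF i)
  have hFsm : ∀ i, ContDiff ℝ (⊤ : ℕ∞) (F i) := by
    intro i; rw [hF_eq]; exact he.mul (hWsm.clm_apply contDiff_const)
  have hFd : ∀ i, Differentiable ℝ (F i) := fun i => (hFsm i).differentiable (by simp)
  have hFper : ∀ (x : Fin (m+1) → ℝ) (i j : Fin (m+1)),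
      F j (x + Pi.single i (ℓ i)) = F j x := by
    intro x i j; rw [hF, hF, heper, hWper]
  -- the PDE in terms of F
  have hpde' : ∀ ξ : Fin (m+1) → ℝ, ∑ i, fderiv ℝ (F i) ξ (Pi.single i 1) = 0 := by
    intro ξ
    have hterm : ∀ i : Fin (m+1),
        deriv (fun s => e (Function.update ξ i s) *
          deriv (fun r => u (Function.update ξ i r) / e (Function.update ξ i r)) s) (ξ i)
        = fderiv ℝ (F i) ξ (Pi.single i 1) := by
      intro i
      have h1 : (fun s => e (Function.update ξ i s) *
          deriv (fun r => u (Function.update ξ i r) / e (Function.update ξ i r)) s)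
          = fun s => F i (Function.update ξ i s) := by
        funext s
        have h2 : (fun r => u (Function.update ξ i r) / e (Function.update ξ i r))
            = fun r => w (Function.update ξ i r) := by
          funext r; rw [hw]
        rw [h2, aux_partial w hwd ξ i s, hF]
      rw [h1, aux_partial (F i) (hFd i) ξ i (ξ i), Function.update_eq_self]
    calc ∑ i, fderiv ℝ (F i) ξ (Pi.single i 1)
        = ∑ i, deriv (fun s => e (Function.update ξ i s) *
            deriv (fun r => u (Function.update ξ i r) / e (Function.update ξ i r)) s) (ξ i) :=
          Finset.sum_congr rfl fun i _ => (hterm i).symm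
      _ = 0 := hpde ξ
  -- the vector field f and the divergence integrand q
  obtain ⟨f, hfdef⟩ : ∃ f : (Fin (m+1) → ℝ) → Fin (m+1) → ℝ,
      f = fun ξ i => w ξ * F i ξ := ⟨_, rfl⟩
  have hfper : ∀ (x : Fin (m+1) → ℝ) (i : Fin (m+1)),
      f (x + Pi.single i (ℓ i)) = f x := by
    intro x i
    rw [hfdef]
    funext j
    simp only
    rw [hwper, hFper]
  obtain ⟨q, hq⟩ : ∃ q : (Fin (m+1) → ℝ) → ℝ,
      ∀ x, q x = ∑ i, e x * (fderiv ℝ w x (Pi.single i 1))^2 := ⟨_, fun _ => rfl⟩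
  have hq_eq : q = fun x => ∑ i, e x * (fderiv ℝ w x (Pi.single i 1))^2 := funext hq
  have hqsm : ContDiff ℝ (⊤ : ℕ∞) q := by
    rw [hq_eq]
    exact ContDiff.sum fun i _ => he.mul ((hWsm.clm_apply contDiff_const).pow 2)
  have hqc : Continuous q := hqsm.continuous
  have hqnn : ∀ x, 0 ≤ q x := by
    intro x; rw [hq]
    exact Finset.sum_nonneg fun i _ => mul_nonneg (hepos x).le (sq_nonneg _)
  have hqper : ∀ (x : Fin (m+1) → ℝ) (i : Fin (m+1)),
      q (x + Pi.single i (ℓ i)) = q x := by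
    intro x i
    rw [hq, hq]
    exact Finset.sum_congr rfl fun j _ => by rw [heper, hWper]
  -- divergence of f equals q
  set f' : (Fin (m+1) → ℝ) → (Fin (m+1) → ℝ) →L[ℝ] (Fin (m+1) → ℝ) :=
    fun x => ContinuousLinearMap.pi (fun i => fderiv ℝ (fun η => w η * F i η) x) with hf'
  have hdiv : ∀ x, (∑ i, f' x (Pi.single i 1) i) = q x := by
    intro x
    have h1 : ∀ i : Fin (m+1), f' x (Pi.single i 1) i
        = w x * fderiv ℝ (F i) x (Pi.single i 1)
          + F i x * fderiv ℝ w x (Pi.single i 1) := by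
      intro i
      rw [hf']
      rw [ContinuousLinearMap.pi_apply, fderiv_fun_mul (hwd x) ((hFd i) x)]
      simp [smul_eq_mul]
    rw [Finset.sum_congr rfl fun i _ => h1 i, Finset.sum_add_distrib,
      ← Finset.mul_sum, hpde' x, mul_zero, zero_add, hq]
    refine Finset.sum_congr rfl fun i _ => ?_
    rw [hF]; ring
  -- the divergence theorem gives ∫ q = 0 over the cell
  have hle : (0 : Fin (m+1) → ℝ) ≤ ℓ := fun i => (hℓ i).le
  have Hd : ∀ x ∈ (Set.pi univ fun i => Ioo ((0 : Fin (m+1) → ℝ) i) (ℓ i)) \ (∅ : Set _),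
      HasFDerivAt f (f' x) x := by
    intro x _
    rw [hfdef]
    exact hasFDerivAt_pi.2 fun i => ((hwd x).mul ((hFd i) x)).hasFDerivAt
  have Hc : ContinuousOn f (Icc 0 ℓ) := by
    rw [hfdef]
    exact (continuous_pi fun i => (hwd.continuous.mul (hFd i).continuous)).continuousOn
  have Hi : IntegrableOn (fun x => ∑ i, f' x (Pi.single i 1) i)
      (Icc (0 : Fin (m+1) → ℝ) ℓ) := by
    have h2 : (fun x => ∑ i, f' x (Pi.single i 1) i) = q := funext hdiv
    rw [h2]
    exact hqc.continuousOn.integrableOn_compact isCompact_Icc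
  have H := MeasureTheory.integral_divergence_of_hasFDerivAt_off_countable
    (0 : Fin (m+1) → ℝ) ℓ hle f f' ∅ countable_empty Hc Hd Hi
  have hbd : ∀ i : Fin (m+1),
      ((∫ x in Icc ((0 : Fin (m+1) → ℝ) ∘ i.succAbove) (ℓ ∘ i.succAbove),
          f (i.insertNth (ℓ i) x) i)
        - ∫ x in Icc ((0 : Fin (m+1) → ℝ) ∘ i.succAbove) (ℓ ∘ i.succAbove),
          f (i.insertNth ((0 : Fin (m+1) → ℝ) i) x) i) = 0 := by
    intro i
    rw [sub_eq_zero]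
    refine setIntegral_congr_fun measurableSet_Icc fun x _ => ?_
    have hins : (i.insertNth (ℓ i) x : Fin (m+1) → ℝ)
        = i.insertNth ((0 : Fin (m+1) → ℝ) i) x + Pi.single i (ℓ i) := by
      funext j
      refine Fin.succAboveCases i ?_ ?_ j
      · simp
      · intro k
        simp [Fin.insertNth_apply_succAbove, Pi.single_eq_of_ne (Fin.succAbove_ne i k)]
    rw [hins, hfper]
  have hq0 : (∫ x in Icc (0 : Fin (m+1) → ℝ) ℓ, q x) = 0 := by
    rw [show (∫ x in Icc (0 : Fin (m+1) → ℝ) ℓ, q x)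
        = ∫ x in Icc (0 : Fin (m+1) → ℝ) ℓ, ∑ i, f' x (Pi.single i 1) i by
      simp only [hdiv]]
    rw [H]
    exact Finset.sum_eq_zero fun i _ => hbd i
  -- q vanishes on the open cell
  have hU : ∀ x ∈ Set.pi univ (fun i => Ioo (0:ℝ) (ℓ i)), q x = 0 := by
    by_contra hcon
    push_neg at hcon
    obtain ⟨x₀, hx₀mem, hx₀ne⟩ := hcon
    have hUopen : IsOpen ({y | q y ≠ 0} ∩ Set.pi univ (fun i => Ioo (0:ℝ) (ℓ i))) :=
      (isOpen_compl_singleton.preimage hqc).inter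
        (isOpen_set_pi finite_univ fun i _ => isOpen_Ioo)
    have hint : IntegrableOn q (Icc (0 : Fin (m+1) → ℝ) ℓ) :=
      hqc.continuousOn.integrableOn_compact isCompact_Icc
    have hae : q =ᵐ[volume.restrict (Icc (0 : Fin (m+1) → ℝ) ℓ)] 0 :=
      (MeasureTheory.integral_eq_zero_iff_of_nonneg (fun x => hqnn x) hint).1 hq0
    have hm0 : volume.restrict (Icc (0 : Fin (m+1) → ℝ) ℓ) {y | q y ≠ 0} = 0 := by
      have := MeasureTheory.ae_iff.1 hae
      simpa using this
    rw [Measure.restrict_apply' measurableSet_Icc] at hm0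
    have hsub : {y | q y ≠ 0} ∩ Set.pi univ (fun i => Ioo (0:ℝ) (ℓ i))
        ⊆ {y | q y ≠ 0} ∩ Icc (0 : Fin (m+1) → ℝ) ℓ := by
      intro y hy
      refine ⟨hy.1, fun i => (hy.2 i (mem_univ i)).1.le, fun i => (hy.2 i (mem_univ i)).2.le⟩
    have hzero : volume ({y | q y ≠ 0} ∩ Set.pi univ (fun i => Ioo (0:ℝ) (ℓ i))) = 0 :=
      measure_mono_null hsub hm0
    have hpos : 0 < volume ({y | q y ≠ 0} ∩ Set.pi univ (fun i => Ioo (0:ℝ) (ℓ i))) :=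
      hUopen.measure_pos volume ⟨x₀, hx₀ne, hx₀mem⟩
    exact hpos.ne' hzero
  -- q vanishes on the closed cell
  have hclos : Icc (0 : Fin (m+1) → ℝ) ℓ ⊆ closure (Set.pi univ fun i => Ioo (0:ℝ) (ℓ i)) := by
    rw [closure_pi_set]
    intro x hx i _
    show x i ∈ closure (Ioo (0:ℝ) (ℓ i))
    rw [closure_Ioo (hℓ i).ne]
    exact ⟨hx.1 i, hx.2 i⟩
  have hqIcc : ∀ x ∈ Icc (0 : Fin (m+1) → ℝ) ℓ, q x = 0 := by
    intro x hx
    have hcl : closure (Set.pi univ fun i => Ioo (0:ℝ) (ℓ i)) ⊆ {y | q y = 0} :=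
      closure_minimal (fun y hy => hU y hy) (isClosed_eq hqc continuous_const)
    exact hcl (hclos hx)
  -- q vanishes everywhere by periodicity
  have hqall : ∀ x, q x = 0 := by
    intro x
    obtain ⟨k, hk⟩ : ∃ k : Fin (m+1) → ℤ, ∀ i, k i = ⌊x i / ℓ i⌋ := ⟨_, fun _ => rfl⟩
    obtain ⟨y, hy⟩ : ∃ y : Fin (m+1) → ℝ, ∀ i, y i = x i - (k i : ℝ) * ℓ i :=
      ⟨_, fun _ => rfl⟩
    have hxy : x = y + fun i => (k i : ℝ) * ℓ i := by
      funext i; rw [Pi.add_apply, hy]; ring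
    have hymem : y ∈ Icc (0 : Fin (m+1) → ℝ) ℓ := by
      constructor
      · intro i
        rw [Pi.zero_apply, hy, hk]
        have h1 : (⌊x i / ℓ i⌋ : ℝ) ≤ x i / ℓ i := Int.floor_le _
        have h2 : (⌊x i / ℓ i⌋ : ℝ) * ℓ i ≤ (x i / ℓ i) * ℓ i :=
          mul_le_mul_of_nonneg_right h1 (hℓ i).le
        rw [div_mul_cancel₀ _ (hℓ i).ne'] at h2
        linarith
      · intro i
        rw [hy, hk]
        have h1 : x i / ℓ i < (⌊x i / ℓ i⌋ : ℝ) + 1 := Int.lt_floor_add_one _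
        have h2 : (x i / ℓ i) * ℓ i < ((⌊x i / ℓ i⌋ : ℝ) + 1) * ℓ i :=
          mul_lt_mul_of_pos_right h1 (hℓ i)
        rw [div_mul_cancel₀ _ (hℓ i).ne'] at h2
        nlinarith
    rw [hxy, aux_per ℓ q hqper k y]
    exact hqIcc y hymem
  -- hence all partial derivatives of w vanish
  have hDzero : ∀ (x : Fin (m+1) → ℝ) (i : Fin (m+1)),
      fderiv ℝ w x (Pi.single i 1) = 0 := by
    intro x i
    have h := hqall x
    rw [hq] at h
    have hterm : e x * (fderiv ℝ w x (Pi.single i 1))^2 = 0 :=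
      (Finset.sum_eq_zero_iff_of_nonneg
        (fun j _ => mul_nonneg (hepos x).le (sq_nonneg _))).1 h i (Finset.mem_univ i)
    rcases mul_eq_zero.1 hterm with h' | h'
    · exact absurd h' (hene x)
    · exact (pow_eq_zero_iff two_ne_zero).1 h'
  -- hence fderiv w = 0 everywhere
  have hW0 : ∀ x, fderiv ℝ w x = 0 := by
    intro x
    ext v
    have hv : v = ∑ i, Pi.single i (v i) := by
      funext j
      rw [Finset.sum_apply]
      exact (Fintype.sum_pi_single j v).symm
    have hcalc : fderiv ℝ w x v = 0 := by
      calc fderiv ℝ w x v = fderiv ℝ w x (∑ i, Pi.single i (v i)) := by rw [← hv]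
        _ = ∑ i, fderiv ℝ w x (Pi.single i (v i)) := map_sum _ _ _
        _ = 0 := Finset.sum_eq_zero fun i _ => by
            have hs : (Pi.single i (v i) : Fin (m+1) → ℝ)
                = (v i) • (Pi.single i (1:ℝ) : Fin (m+1) → ℝ) := by
              rw [← Pi.single_smul, smul_eq_mul, mul_one]
            rw [hs, _root_.map_smul, hDzero, smul_zero]
    simpa using hcalc
  -- conclude
  refine ⟨w 0, fun ξ => ?_⟩
  have hwc : w ξ = w 0 := is_const_of_fderiv_eq_zero hwd hW0 ξ 0
  have hue : u ξ = w ξ * e ξ := by rw [hw, div_mul_cancel₀ _ (hene ξ)]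
  rw [hue, hwc]
end

section
/- Let (Ω₁, μ₁) and (Ω₂, μ₂) be probability spaces, and let e : Ω₁ × Ω₂ → ℝ be bounded measurable with e ≥ ε for some ε > 0. For bounded measurable u define M u = ∫∫ u dμ₁ dμ₂, (M^ξ u)(ω₂) = ∫ u(ω₁, ω₂) dμ₁(ω₁), e_* = e/∫ e(·, ω₂) dμ₁, P u = (M^ξ u)·e_*, Q u = u − P u, P₁ u = P(P u − M^ξ(P u) + M(P u)), and Q₁ u = P(M^ξ(P u) − M(P u)). Then for every bounded measurable u: (a) P₁ u + Q₁ u + Q u = u, with the pointwise form u = (M u)·e_* + ((M^ξ u) − M u)·e_* + (u − (M^ξ u)·e_*); (b) each of P₁, Q₁, Q is idempotent; and (c) every pairwise composition among P₁, Q₁, Q in either order is zero: P₁(Q₁ u) = Q₁(P₁ u) = P₁(Q u) = Q(P₁ u) = Q₁(Q u) = Q(Q₁ u) = 0. -/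
open MeasureTheory

/- The fibre average `M^ξ` of `e_*` is `1`, which gives the closed forms
`P₁ u = (M u) e_*` and `Q₁ u = (M^ξ u - M u) e_*`. Moreover `M^ξ` kills `Q u` and `M` kills
`M^ξ u - M u`, so `P₁`, `Q₁`, `Q` pick out the three summands of
`u = (M u) e_* + (M^ξ u - M u) e_* + (u - (M^ξ u) e_*)`, and every identity reduces to these
closed forms. -/

section Averages

variable {α : Type*} [MeasurableSpace α] {μ : Measure α}

theorem integral_sub_integral_mul_eq_zero {g : α → ℝ} (hg : ∫ x, g x ∂μ = 1) (f : α → ℝ) :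
    ∫ x, (f x - (∫ y, f y ∂μ) * g x) ∂μ = 0 := by
  have hg_int : Integrable g μ := .of_integral_ne_zero (by simp [hg])
  by_cases hf : Integrable f μ
  · rw [integral_sub hf (hg_int.const_mul _), integral_const_mul, hg, mul_one, sub_self]
  · -- then `f - c * g` is not integrable either, and its integral is a junk `0`
    exact integral_undef fun h => hf ((h.add (hg_int.const_mul (∫ y, f y ∂μ))).congr
      (ae_of_all _ fun x => sub_add_cancel _ _))

theorem integral_div_integral_self {f : α → ℝ} (hf : ∫ x, f x ∂μ ≠ 0) :
    ∫ x, f x / ∫ y, f y ∂μ ∂μ = 1 := by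
  rw [integral_div, div_self hf]

variable [IsProbabilityMeasure μ]

theorem integral_sub_integral_eq_zero (f : α → ℝ) : ∫ x, (f x - ∫ y, f y ∂μ) ∂μ = 0 := by
  simpa using integral_sub_integral_mul_eq_zero (μ := μ) (g := fun _ => 1) (by simp) f

theorem integral_sub_integral_add_const {f : α → ℝ} (hf : Integrable f μ) (c : ℝ) :
    ∫ x, (f x - ∫ y, f y ∂μ + c) ∂μ = c := by
  rw [integral_add (f := fun x => f x - ∫ y, f y ∂μ) (hf.sub (integrable_const _))
    (integrable_const c), integral_sub_integral_eq_zero, integral_const]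
  simp

theorem le_integral_of_forall_le {f : α → ℝ} (hf : Integrable f μ) {c : ℝ} (h : ∀ x, c ≤ f x) :
    c ≤ ∫ x, f x ∂μ := by
  simpa using integral_mono (integrable_const c) hf h

end Averages

theorem integral_prodMk_right_pos {Ω₁ Ω₂ : Type*} [MeasurableSpace Ω₁] [MeasurableSpace Ω₂]
    (μ₁ : Measure Ω₁) [IsProbabilityMeasure μ₁] {e : Ω₁ × Ω₂ → ℝ} (he : Measurable e)
    {ε : ℝ} (hε : 0 < ε) (heε : ∀ x, ε ≤ e x) {C : ℝ} (heC : ∀ x, e x ≤ C) (ω₂ : Ω₂) :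
    0 < ∫ ω₁, e (ω₁, ω₂) ∂μ₁ := by
  have h_int : Integrable (fun ω₁ => e (ω₁, ω₂)) μ₁ :=
    .of_bound (he.comp measurable_prodMk_right).aestronglyMeasurable C <| ae_of_all _ fun ω₁ => by
      rw [Real.norm_of_nonneg (hε.le.trans (heε _))]
      exact heC _
  exact hε.trans_le (le_integral_of_forall_le h_int fun ω₁ => heε (ω₁, ω₂))

noncomputable section Projectors

variable {Ω₁ Ω₂ : Type*} [MeasurableSpace Ω₁]

/- `fiberAvg`, `totalAvg` and `normalizedDensity` are the paper's `M^ξ`, `M` and `e_*`. -/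

def fiberAvg (μ₁ : Measure Ω₁) (f : Ω₁ × Ω₂ → ℝ) (ω₂ : Ω₂) : ℝ := ∫ ω₁, f (ω₁, ω₂) ∂μ₁

def totalAvg [MeasurableSpace Ω₂] (μ₁ : Measure Ω₁) (μ₂ : Measure Ω₂) (f : Ω₁ × Ω₂ → ℝ) : ℝ :=
  ∫ ω₂, fiberAvg μ₁ f ω₂ ∂μ₂

def normalizedDensity (μ₁ : Measure Ω₁) (e : Ω₁ × Ω₂ → ℝ) (x : Ω₁ × Ω₂) : ℝ :=
  e x / fiberAvg μ₁ e x.2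

def projP (μ₁ : Measure Ω₁) (e f : Ω₁ × Ω₂ → ℝ) (x : Ω₁ × Ω₂) : ℝ :=
  fiberAvg μ₁ f x.2 * normalizedDensity μ₁ e x

def projQ (μ₁ : Measure Ω₁) (e f : Ω₁ × Ω₂ → ℝ) (x : Ω₁ × Ω₂) : ℝ := f x - projP μ₁ e f x

def projP₁ [MeasurableSpace Ω₂] (μ₁ : Measure Ω₁) (μ₂ : Measure Ω₂) (e f : Ω₁ × Ω₂ → ℝ) :
    Ω₁ × Ω₂ → ℝ :=
  projP μ₁ e fun x =>
    projP μ₁ e f x - fiberAvg μ₁ (projP μ₁ e f) x.2 + totalAvg μ₁ μ₂ (projP μ₁ e f)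

def projQ₁ [MeasurableSpace Ω₂] (μ₁ : Measure Ω₁) (μ₂ : Measure Ω₂) (e f : Ω₁ × Ω₂ → ℝ) :
    Ω₁ × Ω₂ → ℝ :=
  projP μ₁ e fun x => fiberAvg μ₁ (projP μ₁ e f) x.2 - totalAvg μ₁ μ₂ (projP μ₁ e f)

variable {μ₁ : Measure Ω₁} {e : Ω₁ × Ω₂ → ℝ}

theorem integral_normalizedDensity (hne : ∀ ω₂, fiberAvg μ₁ e ω₂ ≠ 0) (ω₂ : Ω₂) :
    ∫ ω₁, normalizedDensity μ₁ e (ω₁, ω₂) ∂μ₁ = 1 :=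
  integral_div_integral_self (hne ω₂)

theorem integrable_normalizedDensity (hne : ∀ ω₂, fiberAvg μ₁ e ω₂ ≠ 0) (ω₂ : Ω₂) :
    Integrable (fun ω₁ => normalizedDensity μ₁ e (ω₁, ω₂)) μ₁ :=
  .of_integral_ne_zero (by rw [integral_normalizedDensity hne]; exact one_ne_zero)

theorem integral_const_mul_normalizedDensity (hne : ∀ ω₂, fiberAvg μ₁ e ω₂ ≠ 0) (c : ℝ)
    (ω₂ : Ω₂) : ∫ ω₁, c * normalizedDensity μ₁ e (ω₁, ω₂) ∂μ₁ = c := by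
  rw [integral_const_mul, integral_normalizedDensity hne, mul_one]

theorem fiberAvg_projP (hne : ∀ ω₂, fiberAvg μ₁ e ω₂ ≠ 0) (f : Ω₁ × Ω₂ → ℝ) :
    fiberAvg μ₁ (projP μ₁ e f) = fiberAvg μ₁ f :=
  funext fun ω₂ => integral_const_mul_normalizedDensity hne (fiberAvg μ₁ f ω₂) ω₂

theorem fiberAvg_projQ (hne : ∀ ω₂, fiberAvg μ₁ e ω₂ ≠ 0) (f : Ω₁ × Ω₂ → ℝ) :
    fiberAvg μ₁ (projQ μ₁ e f) = 0 :=
  funext fun ω₂ => integral_sub_integral_mul_eq_zero (integral_normalizedDensity hne ω₂) _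

theorem projQ_projQ (hne : ∀ ω₂, fiberAvg μ₁ e ω₂ ≠ 0) (f : Ω₁ × Ω₂ → ℝ) :
    projQ μ₁ e (projQ μ₁ e f) = projQ μ₁ e f := by
  ext x
  rw [projQ, projP, fiberAvg_projQ hne]
  simp

variable [MeasurableSpace Ω₂] {μ₂ : Measure Ω₂}

theorem totalAvg_projP (hne : ∀ ω₂, fiberAvg μ₁ e ω₂ ≠ 0) (f : Ω₁ × Ω₂ → ℝ) :
    totalAvg μ₁ μ₂ (projP μ₁ e f) = totalAvg μ₁ μ₂ f := by
  rw [totalAvg, fiberAvg_projP hne, totalAvg]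

theorem totalAvg_projQ (hne : ∀ ω₂, fiberAvg μ₁ e ω₂ ≠ 0) (f : Ω₁ × Ω₂ → ℝ) :
    totalAvg μ₁ μ₂ (projQ μ₁ e f) = 0 := by
  simp [totalAvg, fiberAvg_projQ hne]

variable [IsProbabilityMeasure μ₁]

theorem projP₁_apply (hne : ∀ ω₂, fiberAvg μ₁ e ω₂ ≠ 0) (f : Ω₁ × Ω₂ → ℝ) (x : Ω₁ × Ω₂) :
    projP₁ μ₁ μ₂ e f x = totalAvg μ₁ μ₂ f * normalizedDensity μ₁ e x := by
  rw [projP₁, projP, ← totalAvg_projP hne f]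
  exact congrArg (· * _) (integral_sub_integral_add_const
    ((integrable_normalizedDensity hne x.2).const_mul (fiberAvg μ₁ f x.2)) _)

theorem projQ₁_apply (hne : ∀ ω₂, fiberAvg μ₁ e ω₂ ≠ 0) (f : Ω₁ × Ω₂ → ℝ) (x : Ω₁ × Ω₂) :
    projQ₁ μ₁ μ₂ e f x = (fiberAvg μ₁ f x.2 - totalAvg μ₁ μ₂ f) * normalizedDensity μ₁ e x := by
  rw [projQ₁, projP, fiberAvg_projP hne, totalAvg_projP hne]
  simp [fiberAvg]

theorem fiberAvg_projP₁ (hne : ∀ ω₂, fiberAvg μ₁ e ω₂ ≠ 0) (f : Ω₁ × Ω₂ → ℝ) :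
    fiberAvg μ₁ (projP₁ μ₁ μ₂ e f) = fun _ => totalAvg μ₁ μ₂ f := by
  ext ω₂
  simp only [fiberAvg, projP₁_apply hne]
  exact integral_const_mul_normalizedDensity hne _ ω₂

theorem fiberAvg_projQ₁ (hne : ∀ ω₂, fiberAvg μ₁ e ω₂ ≠ 0) (f : Ω₁ × Ω₂ → ℝ) :
    fiberAvg μ₁ (projQ₁ μ₁ μ₂ e f) = fun ω₂ => fiberAvg μ₁ f ω₂ - totalAvg μ₁ μ₂ f := by
  ext ω₂
  simp only [fiberAvg, projQ₁_apply hne]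
  exact integral_const_mul_normalizedDensity hne _ ω₂

theorem projP₁_add_projQ₁_add_projQ (hne : ∀ ω₂, fiberAvg μ₁ e ω₂ ≠ 0) (f : Ω₁ × Ω₂ → ℝ)
    (x : Ω₁ × Ω₂) : projP₁ μ₁ μ₂ e f x + projQ₁ μ₁ μ₂ e f x + projQ μ₁ e f x = f x := by
  rw [projP₁_apply hne, projQ₁_apply hne, projQ, projP]
  ring

theorem projP₁_projQ (hne : ∀ ω₂, fiberAvg μ₁ e ω₂ ≠ 0) (f : Ω₁ × Ω₂ → ℝ) :
    projP₁ μ₁ μ₂ e (projQ μ₁ e f) = 0 := by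
  ext x
  rw [projP₁_apply hne, totalAvg_projQ hne, zero_mul, Pi.zero_apply]

theorem projQ_projP₁ (hne : ∀ ω₂, fiberAvg μ₁ e ω₂ ≠ 0) (f : Ω₁ × Ω₂ → ℝ) :
    projQ μ₁ e (projP₁ μ₁ μ₂ e f) = 0 := by
  ext x
  rw [projQ, projP, fiberAvg_projP₁ hne, projP₁_apply hne, sub_self, Pi.zero_apply]

theorem projQ₁_projQ (hne : ∀ ω₂, fiberAvg μ₁ e ω₂ ≠ 0) (f : Ω₁ × Ω₂ → ℝ) :
    projQ₁ μ₁ μ₂ e (projQ μ₁ e f) = 0 := by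
  ext x
  rw [projQ₁_apply hne, fiberAvg_projQ hne, totalAvg_projQ hne]
  simp

theorem projQ_projQ₁ (hne : ∀ ω₂, fiberAvg μ₁ e ω₂ ≠ 0) (f : Ω₁ × Ω₂ → ℝ) :
    projQ μ₁ e (projQ₁ μ₁ μ₂ e f) = 0 := by
  ext x
  rw [projQ, projP, fiberAvg_projQ₁ hne, projQ₁_apply hne, sub_self, Pi.zero_apply]

variable [IsProbabilityMeasure μ₂]

theorem totalAvg_projP₁ (hne : ∀ ω₂, fiberAvg μ₁ e ω₂ ≠ 0) (f : Ω₁ × Ω₂ → ℝ) :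
    totalAvg μ₁ μ₂ (projP₁ μ₁ μ₂ e f) = totalAvg μ₁ μ₂ f := by
  simp [totalAvg, fiberAvg_projP₁ hne]

theorem totalAvg_projQ₁ (hne : ∀ ω₂, fiberAvg μ₁ e ω₂ ≠ 0) (f : Ω₁ × Ω₂ → ℝ) :
    totalAvg μ₁ μ₂ (projQ₁ μ₁ μ₂ e f) = 0 := by
  rw [totalAvg, fiberAvg_projQ₁ hne]
  exact integral_sub_integral_eq_zero _

theorem projP₁_projP₁ (hne : ∀ ω₂, fiberAvg μ₁ e ω₂ ≠ 0) (f : Ω₁ × Ω₂ → ℝ) :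
    projP₁ μ₁ μ₂ e (projP₁ μ₁ μ₂ e f) = projP₁ μ₁ μ₂ e f := by
  ext x
  rw [projP₁_apply hne, projP₁_apply hne, totalAvg_projP₁ hne]

theorem projQ₁_projQ₁ (hne : ∀ ω₂, fiberAvg μ₁ e ω₂ ≠ 0) (f : Ω₁ × Ω₂ → ℝ) :
    projQ₁ μ₁ μ₂ e (projQ₁ μ₁ μ₂ e f) = projQ₁ μ₁ μ₂ e f := by
  ext x
  rw [projQ₁_apply hne, projQ₁_apply hne, fiberAvg_projQ₁ hne, totalAvg_projQ₁ hne, sub_zero]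

theorem projP₁_projQ₁ (hne : ∀ ω₂, fiberAvg μ₁ e ω₂ ≠ 0) (f : Ω₁ × Ω₂ → ℝ) :
    projP₁ μ₁ μ₂ e (projQ₁ μ₁ μ₂ e f) = 0 := by
  ext x
  rw [projP₁_apply hne, totalAvg_projQ₁ hne, zero_mul, Pi.zero_apply]

theorem projQ₁_projP₁ (hne : ∀ ω₂, fiberAvg μ₁ e ω₂ ≠ 0) (f : Ω₁ × Ω₂ → ℝ) :
    projQ₁ μ₁ μ₂ e (projP₁ μ₁ μ₂ e f) = 0 := by
  ext x
  rw [projQ₁_apply hne, fiberAvg_projP₁ hne, totalAvg_projP₁ hne, sub_self, zero_mul,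
    Pi.zero_apply]

end Projectors

theorem stmt_16_general {Ω₁ Ω₂ : Type*} [MeasurableSpace Ω₁] [MeasurableSpace Ω₂]
    (μ₁ : Measure Ω₁) (μ₂ : Measure Ω₂)
    [IsProbabilityMeasure μ₁] [IsProbabilityMeasure μ₂]
    (e : Ω₁ × Ω₂ → ℝ) (hemeas : Measurable e)
    (ε : ℝ) (hε : 0 < ε) (heε : ∀ x, ε ≤ e x)
    (Ce : ℝ) (heC : ∀ x, e x ≤ Ce)
    (u : Ω₁ × Ω₂ → ℝ) :
    let Mxi : (Ω₁ × Ω₂ → ℝ) → Ω₂ → ℝ := fun f ω₂ => ∫ ω₁, f (ω₁, ω₂) ∂μ₁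
    let M : (Ω₁ × Ω₂ → ℝ) → ℝ := fun f => ∫ ω₂, Mxi f ω₂ ∂μ₂
    let estar : Ω₁ × Ω₂ → ℝ := fun x => e x / Mxi e x.2
    let P : (Ω₁ × Ω₂ → ℝ) → Ω₁ × Ω₂ → ℝ := fun f x => Mxi f x.2 * estar x
    let Q : (Ω₁ × Ω₂ → ℝ) → Ω₁ × Ω₂ → ℝ := fun f x => f x - P f x
    let P₁ : (Ω₁ × Ω₂ → ℝ) → Ω₁ × Ω₂ → ℝ :=
      fun f => P (fun x => P f x - Mxi (P f) x.2 + M (P f))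
    let Q₁ : (Ω₁ × Ω₂ → ℝ) → Ω₁ × Ω₂ → ℝ :=
      fun f => P (fun x => Mxi (P f) x.2 - M (P f))
    -- (a) decomposition of unity and its pointwise form
    ((∀ x, P₁ u x + Q₁ u x + Q u x = u x) ∧
      (∀ x, u x = M u * estar x + (Mxi u x.2 - M u) * estar x
        + (u x - Mxi u x.2 * estar x))) ∧
    -- (b) idempotency
    ((∀ x, P₁ (P₁ u) x = P₁ u x) ∧ (∀ x, Q₁ (Q₁ u) x = Q₁ u x) ∧
      (∀ x, Q (Q u) x = Q u x)) ∧
    -- (c) pairwise products vanish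
    ((∀ x, P₁ (Q₁ u) x = 0) ∧ (∀ x, Q₁ (P₁ u) x = 0) ∧
      (∀ x, P₁ (Q u) x = 0) ∧ (∀ x, Q (P₁ u) x = 0) ∧
      (∀ x, Q₁ (Q u) x = 0) ∧ (∀ x, Q (Q₁ u) x = 0)) := by
  intro Mxi M estar P Q P₁ Q₁
  have hne : ∀ ω₂, fiberAvg μ₁ e ω₂ ≠ 0 := fun ω₂ =>
    (integral_prodMk_right_pos μ₁ hemeas hε heε heC ω₂).ne'
  exact ⟨⟨projP₁_add_projQ₁_add_projQ hne u, fun x => by ring⟩,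
    ⟨congrFun (projP₁_projP₁ hne u), congrFun (projQ₁_projQ₁ hne u),
      congrFun (projQ_projQ hne u)⟩,
    congrFun (projP₁_projQ₁ hne u), congrFun (projQ₁_projP₁ hne u),
    congrFun (projP₁_projQ hne u), congrFun (projQ_projP₁ hne u),
    congrFun (projQ₁_projQ hne u), congrFun (projQ_projQ₁ hne u)⟩

/-- The decomposition of unity by the triad P₁ = P(I − M^ξ + M)P, Q₁ = P(M^ξ − M)P,
Q = I − P: they sum to the identity, are idempotent, and have pairwise zero products. -/
theorem stmt_16 {Ω₁ Ω₂ : Type*} [MeasurableSpace Ω₁] [MeasurableSpace Ω₂]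
    (μ₁ : Measure Ω₁) (μ₂ : Measure Ω₂)
    [IsProbabilityMeasure μ₁] [IsProbabilityMeasure μ₂]
    (e : Ω₁ × Ω₂ → ℝ) (hemeas : Measurable e)
    (ε : ℝ) (hε : 0 < ε) (heε : ∀ x, ε ≤ e x)
    (Ce : ℝ) (heC : ∀ x, e x ≤ Ce)
    (u : Ω₁ × Ω₂ → ℝ) (humeas : Measurable u)
    (Cu : ℝ) (huC : ∀ x, |u x| ≤ Cu) :
    let Mxi : (Ω₁ × Ω₂ → ℝ) → Ω₂ → ℝ := fun f ω₂ => ∫ ω₁, f (ω₁, ω₂) ∂μ₁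
    let M : (Ω₁ × Ω₂ → ℝ) → ℝ := fun f => ∫ ω₂, Mxi f ω₂ ∂μ₂
    let estar : Ω₁ × Ω₂ → ℝ := fun x => e x / Mxi e x.2
    let P : (Ω₁ × Ω₂ → ℝ) → Ω₁ × Ω₂ → ℝ := fun f x => Mxi f x.2 * estar x
    let Q : (Ω₁ × Ω₂ → ℝ) → Ω₁ × Ω₂ → ℝ := fun f x => f x - P f x
    let P₁ : (Ω₁ × Ω₂ → ℝ) → Ω₁ × Ω₂ → ℝ :=
      fun f => P (fun x => P f x - Mxi (P f) x.2 + M (P f))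
    let Q₁ : (Ω₁ × Ω₂ → ℝ) → Ω₁ × Ω₂ → ℝ :=
      fun f => P (fun x => Mxi (P f) x.2 - M (P f))
    -- (a) decomposition of unity and its pointwise form
    ((∀ x, P₁ u x + Q₁ u x + Q u x = u x) ∧
      (∀ x, u x = M u * estar x + (Mxi u x.2 - M u) * estar x
        + (u x - Mxi u x.2 * estar x))) ∧
    -- (b) idempotency
    ((∀ x, P₁ (P₁ u) x = P₁ u x) ∧ (∀ x, Q₁ (Q₁ u) x = Q₁ u x) ∧
      (∀ x, Q (Q u) x = Q u x)) ∧
    -- (c) pairwise products vanish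
    ((∀ x, P₁ (Q₁ u) x = 0) ∧ (∀ x, Q₁ (P₁ u) x = 0) ∧
      (∀ x, P₁ (Q u) x = 0) ∧ (∀ x, Q (P₁ u) x = 0) ∧
      (∀ x, Q₁ (Q u) x = 0) ∧ (∀ x, Q (Q₁ u) x = 0)) :=
  stmt_16_general μ₁ μ₂ e hemeas ε hε heε Ce heC u
end

section
/- Let 𝕋 = ℝ/ℤ carry its Haar probability measure, let h : 𝕋 → ℝ be continuous, and for a ∈ ℝ define w(a, ω) = exp(a·h(ω)) / ∫ exp(a·h) dω. Let f, g : ℝ × ℝ → ℝ be C^∞, and define F(a, p, s) = ∫ w(a, ω)·f(w(a, ω)·p, s) dω and G(a, p, s) = ∫ g(w(a, ω)·p, s) dω. Suppose pₑ > 0 and sₑ > 0 satisfy f(pₑ, sₑ) = 0 and g(pₑ, sₑ) = 0, and the 2×2 Jacobian matrix of (f, g) with respect to (p, s) at (pₑ, sₑ) is invertible. Then there exist a₀ > 0 and continuously differentiable functions p̄, s̄ : (−a₀, a₀) → ℝ with p̄(0) = pₑ, s̄(0) = sₑ, and F(a, p̄(a), s̄(a)) = 0 and G(a, p̄(a), s̄(a))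 = 0 for all a ∈ (−a₀, a₀). -/
open MeasureTheory Metric

local notation "𝕋" => AddCircle (1:ℝ)

private lemma torus_integrable {β : Type*} [NormedAddCommGroup β] (φ : 𝕋 → β)
    (hφ : Continuous φ) : Integrable φ volume := by
  rw [← integrableOn_univ]
  exact hφ.continuousOn.integrableOn_compact isCompact_univ

private lemma torus_prob : IsProbabilityMeasure (volume : Measure 𝕋) :=
  ⟨by rw [AddCircle.measure_univ]; norm_num⟩

/-- C¹ parametric integrals over the circle. -/
private lemma contDiff_one_integral {E : Type*} [NormedAddCommGroup E] [NormedSpace ℝ E]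
    [ProperSpace E] (u : E → 𝕋 → ℝ) (u' : E → 𝕋 → (E →L[ℝ] ℝ))
    (hu : Continuous (fun q : E × 𝕋 => u q.1 q.2))
    (hu' : Continuous (fun q : E × 𝕋 => u' q.1 q.2))
    (hd : ∀ x ω, HasFDerivAt (fun x => u x ω) (u' x ω) x) :
    ContDiff ℝ 1 (fun x => ∫ ω, u x ω) := by
  haveI : SecondCountableTopologyEither 𝕋 (E →L[ℝ] ℝ) := ⟨Or.inl inferInstance⟩
  have key : ∀ x₀ : E, HasFDerivAt (fun x => ∫ ω, u x ω) (∫ ω, u' x₀ ω) x₀ := by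
    intro x₀
    obtain ⟨C, hC⟩ := ((isCompact_closedBall x₀ 1).prod isCompact_univ).exists_bound_of_continuousOn
      hu'.norm.continuousOn
    refine hasFDerivAt_integral_of_dominated_of_fderiv_le (s := ball x₀ 1) (bound := fun _ => C)
      (ball_mem_nhds x₀ one_pos) ?_ ?_ ?_ ?_ ?_ ?_
    · exact Filter.Eventually.of_forall fun x =>
        (hu.comp (Continuous.prodMk_right x)).aestronglyMeasurable
    · exact torus_integrable _ (hu.comp (Continuous.prodMk_right x₀))
    · exact (hu'.comp (Continuous.prodMk_right x₀)).aestronglyMeasurable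
    · refine Filter.Eventually.of_forall fun ω x hx => ?_
      simpa using hC (x, ω) ⟨ball_subset_closedBall hx, Set.mem_univ _⟩
    · exact torus_integrable _ continuous_const
    · exact Filter.Eventually.of_forall fun ω x _ => hd x ω
  have hfd : ∀ x, fderiv ℝ (fun x => ∫ ω, u x ω) x = ∫ ω, u' x ω := fun x => (key x).fderiv
  refine contDiff_one_iff_fderiv.2 ⟨fun x => (key x).differentiableAt, ?_⟩
  have heq : (fun x => fderiv ℝ (fun x => ∫ ω, u x ω) x) = fun x => ∫ ω, u' x ω := funext hfd
  show Continuous (fun x => fderiv ℝ (fun x => ∫ ω, u x ω) x)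
  rw [heq, continuous_iff_continuousAt]
  intro x₀
  obtain ⟨C, hC⟩ := ((isCompact_closedBall x₀ 1).prod isCompact_univ).exists_bound_of_continuousOn
    hu'.norm.continuousOn
  refine continuousAt_of_dominated (bound := fun _ => C) ?_ ?_ ?_ ?_
  · exact Filter.Eventually.of_forall fun x =>
      (hu'.comp (Continuous.prodMk_right x)).aestronglyMeasurable
  · filter_upwards [Metric.closedBall_mem_nhds x₀ one_pos] with x hx
    exact Filter.Eventually.of_forall fun ω => by
      simpa using hC (x, ω) ⟨hx, Set.mem_univ _⟩
  · exact torus_integrable _ continuous_const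
  · exact Filter.Eventually.of_forall fun ω =>
      (hu'.comp (continuous_id.prodMk continuous_const)).continuousAt

/-- Quasi-equilibrium branch existence (part of Theorem 3): given a non-degenerate
positive equilibrium (pₑ, sₑ) of the kinetics (f, g), there is a smooth branch of
quasi-equilibria of the averaged (leading slow) system for small effective amplitudes a. -/
theorem stmt_18 (h : AddCircle (1:ℝ) → ℝ) (hh : Continuous h)
    (f g : ℝ → ℝ → ℝ)
    (hf : ContDiff ℝ (⊤ : ℕ∞) (Function.uncurry f)) (hg : ContDiff ℝ (⊤ : ℕ∞) (Function.uncurry g))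
    (pe se : ℝ) (hpe : 0 < pe) (hse : 0 < se)
    (hfe : f pe se = 0) (hge : g pe se = 0)
    (hJ : deriv (fun p => f p se) pe * deriv (fun s => g pe s) se
        - deriv (fun s => f pe s) se * deriv (fun p => g p se) pe ≠ 0) :
    let w : ℝ → AddCircle (1:ℝ) → ℝ :=
      fun a ω => Real.exp (a * h ω) / ∫ ω', Real.exp (a * h ω')
    let F : ℝ → ℝ → ℝ → ℝ := fun a p s => ∫ ω, w a ω * f (w a ω * p) s
    let G : ℝ → ℝ → ℝ → ℝ := fun a p s => ∫ ω, g (w a ω * p) s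
    ∃ a₀ > 0, ∃ pbar sbar : ℝ → ℝ,
      ContDiffOn ℝ 1 pbar (Set.Ioo (-a₀) a₀) ∧
      ContDiffOn ℝ 1 sbar (Set.Ioo (-a₀) a₀) ∧
      pbar 0 = pe ∧ sbar 0 = se ∧
      ∀ a ∈ Set.Ioo (-a₀) a₀, F a (pbar a) (sbar a) = 0 ∧ G a (pbar a) (sbar a) = 0 := by
  intro w F G
  haveI := torus_prob
  set I : ℝ → ℝ := fun a => ∫ ω', Real.exp (a * h ω') with hI_def
  -- positivity of I
  obtain ⟨M, hM⟩ := isCompact_univ.exists_bound_of_continuousOn hh.norm.continuousOn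
  have hM' : ∀ ω, |h ω| ≤ M := fun ω => by simpa using hM ω (Set.mem_univ ω)
  have Ipos : ∀ a, 0 < I a := by
    intro a
    have hle : ∀ ω : 𝕋, Real.exp (-(|a| * M)) ≤ Real.exp (a * h ω) := by
      intro ω
      apply Real.exp_le_exp.2
      have : |a * h ω| ≤ |a| * M := by
        rw [abs_mul]; exact mul_le_mul_of_nonneg_left (hM' ω) (abs_nonneg a)
      linarith [neg_abs_le (a * h ω)]
    calc (0:ℝ) < Real.exp (-(|a| * M)) := Real.exp_pos _
      _ = ∫ _ω : 𝕋, Real.exp (-(|a| * M)) := by simp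
      _ ≤ I a := integral_mono (torus_integrable _ continuous_const)
          (torus_integrable _ (by continuity)) hle
  -- I is C¹ (by Lemma A with E = ℝ)
  have hIcd : ContDiff ℝ 1 I := by
    apply contDiff_one_integral (u := fun a ω => Real.exp (a * h ω))
      (u' := fun a ω => ContinuousLinearMap.smulRight (1 : ℝ →L[ℝ] ℝ)
        (Real.exp (a * h ω) * h ω))
    · exact (Real.continuous_exp.comp (continuous_fst.mul (hh.comp continuous_snd)))
    · exact (ContinuousLinearMap.smulRightL ℝ ℝ ℝ 1).continuous.comp
        ((Real.continuous_exp.comp (continuous_fst.mul (hh.comp continuous_snd))).mul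
          (hh.comp continuous_snd))
    · intro a ω
      have h1 : HasDerivAt (fun a : ℝ => a * h ω) (h ω) a := by
        simpa using (hasDerivAt_id a).mul_const (h ω)
      exact h1.exp.hasFDerivAt
  have hIat : I 0 = 1 := by
    simp [hI_def]
  -- the W-kernel as a C¹ function of ((a,p,s), t)
  set Wk : ((ℝ × ℝ × ℝ) × ℝ) → ℝ := fun z => Real.exp (z.1.1 * z.2) / I z.1.1 with hWk_def
  have hWkcd : ContDiff ℝ 1 Wk := by
    apply ContDiff.div
    · exact (Real.contDiff_exp.comp
        ((contDiff_fst.fst).mul contDiff_snd)).of_le le_top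
    · exact hIcd.comp (contDiff_fst.fst)
    · exact fun z => (Ipos z.1.1).ne'
  -- integrand for F
  set Θf : ((ℝ × ℝ × ℝ) × ℝ) → ℝ :=
    fun z => Wk z * f (Wk z * z.1.2.1) z.1.2.2 with hΘf_def
  set Θg : ((ℝ × ℝ × ℝ) × ℝ) → ℝ :=
    fun z => g (Wk z * z.1.2.1) z.1.2.2 with hΘg_def
  have hcomp : ContDiff ℝ 1 (fun z : (ℝ × ℝ × ℝ) × ℝ => (Wk z * z.1.2.1, z.1.2.2)) :=
    (hWkcd.mul (contDiff_fst.snd.fst)).prodMk (contDiff_fst.snd.snd)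
  have hΘfcd : ContDiff ℝ 1 Θf := by
    have : ContDiff ℝ 1 (Function.uncurry f ∘ fun z : (ℝ × ℝ × ℝ) × ℝ =>
        (Wk z * z.1.2.1, z.1.2.2)) := (hf.of_le (by simp)).comp hcomp
    exact hWkcd.mul this
  have hΘgcd : ContDiff ℝ 1 Θg := by
    have : ContDiff ℝ 1 (Function.uncurry g ∘ fun z : (ℝ × ℝ × ℝ) × ℝ =>
        (Wk z * z.1.2.1, z.1.2.2)) := (hg.of_le (by simp)).comp hcomp
    exact this
  -- the averaged maps as functions on ℝ³
  set FF : ℝ × ℝ × ℝ → ℝ := fun x => ∫ ω, Θf (x, h ω) with hFF_def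
  set GG : ℝ × ℝ × ℝ → ℝ := fun x => ∫ ω, Θg (x, h ω) with hGG_def
  have hpair : Continuous (fun q : (ℝ × ℝ × ℝ) × 𝕋 => (q.1, h q.2)) :=
    continuous_fst.prodMk (hh.comp continuous_snd)
  have cd_int : ∀ Θ : ((ℝ × ℝ × ℝ) × ℝ) → ℝ, ContDiff ℝ 1 Θ →
      ContDiff ℝ 1 (fun x : ℝ × ℝ × ℝ => ∫ ω, Θ (x, h ω)) := by
    intro Θ hΘ
    apply contDiff_one_integral (u := fun x ω => Θ (x, h ω))
      (u' := fun x ω => (fderiv ℝ Θ (x, h ω)).comp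
        (ContinuousLinearMap.inl ℝ (ℝ × ℝ × ℝ) ℝ))
    · exact hΘ.continuous.comp hpair
    · exact (((ContinuousLinearMap.compL ℝ (ℝ × ℝ × ℝ) ((ℝ × ℝ × ℝ) × ℝ) ℝ).flip
        (ContinuousLinearMap.inl ℝ (ℝ × ℝ × ℝ) ℝ)).continuous.comp
        ((hΘ.continuous_fderiv one_ne_zero).comp hpair))
    · intro x ω
      exact ((hΘ.differentiable one_ne_zero (x, h ω)).hasFDerivAt).comp x
        (hasFDerivAt_prodMk_left x (h ω))
  have hFFcd := cd_int Θf hΘfcd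
  have hGGcd := cd_int Θg hΘgcd
  have hFFeq : ∀ a p s, F a p s = FF (a, p, s) := fun a p s => rfl
  have hGGeq : ∀ a p s, G a p s = GG (a, p, s) := fun a p s => rfl
  -- values on the slice a = 0
  have hslicef : ∀ p s : ℝ, FF (0, p, s) = f p s := by
    intro p s
    have hpt : ∀ ω : 𝕋, Θf ((0, p, s), h ω) = f p s := by
      intro ω; simp [hΘf_def, hWk_def, hIat]
    show (∫ ω, Θf (((0:ℝ), p, s), h ω)) = f p s
    simp only [hpt]
    simp
  have hsliceg : ∀ p s : ℝ, GG (0, p, s) = g p s := by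
    intro p s
    have hpt : ∀ ω : 𝕋, Θg ((0, p, s), h ω) = g p s := by
      intro ω; simp [hΘg_def, hWk_def, hIat]
    show (∫ ω, Θg (((0:ℝ), p, s), h ω)) = g p s
    simp only [hpt]
    simp
  -- the full map Φ and its derivative at x₀
  set Φ : ℝ × ℝ × ℝ → ℝ × ℝ × ℝ := fun x => (x.1, FF x, GG x) with hΦ_def
  have hΦcd : ContDiff ℝ 1 Φ := contDiff_fst.prodMk (hFFcd.prodMk hGGcd)
  set x₀ : ℝ × ℝ × ℝ := (0, pe, se) with hx₀_def
  have hΦx₀ : Φ x₀ = (0, 0, 0) := by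
    show ((0:ℝ), FF x₀, GG x₀) = (0, 0, 0)
    rw [hx₀_def]
    rw [hslicef pe se, hsliceg pe se, hfe, hge]
  have hFFd := (hFFcd.differentiable one_ne_zero x₀).hasFDerivAt
  have hGGd := (hGGcd.differentiable one_ne_zero x₀).hasFDerivAt
  set A : (ℝ × ℝ × ℝ) →L[ℝ] ℝ × ℝ × ℝ :=
    (ContinuousLinearMap.fst ℝ ℝ (ℝ × ℝ)).prod ((fderiv ℝ FF x₀).prod (fderiv ℝ GG x₀))
    with hA_def
  have hΦd : HasFDerivAt Φ A x₀ := (hasFDerivAt_fst).prodMk (hFFd.prodMk hGGd)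
  -- slice derivatives
  have hfd : DifferentiableAt ℝ (Function.uncurry f) (pe, se) :=
    (hf.differentiable (by simp)).differentiableAt
  have hgd : DifferentiableAt ℝ (Function.uncurry g) (pe, se) :=
    (hg.differentiable (by simp)).differentiableAt
  have hslice_deriv : ∀ (FF' : ℝ × ℝ × ℝ → ℝ) (φ : ℝ → ℝ → ℝ),
      HasFDerivAt FF' (fderiv ℝ FF' x₀) x₀ → (∀ p s, FF' (0, p, s) = φ p s) →
      fderiv ℝ (Function.uncurry φ) (pe, se)
        = (fderiv ℝ FF' x₀).comp (ContinuousLinearMap.inr ℝ ℝ (ℝ × ℝ)) := by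
    intro FF' φ hFd hsl
    have hι : HasFDerivAt (fun q : ℝ × ℝ => (((0:ℝ), q) : ℝ × ℝ × ℝ))
        (ContinuousLinearMap.inr ℝ ℝ (ℝ × ℝ)) (pe, se) :=
      hasFDerivAt_prodMk_right (0:ℝ) ((pe, se) : ℝ × ℝ)
    have hcomp : HasFDerivAt (fun q : ℝ × ℝ => FF' (0, q))
        ((fderiv ℝ FF' x₀).comp (ContinuousLinearMap.inr ℝ ℝ (ℝ × ℝ))) (pe, se) :=
      hFd.comp (pe, se) hι
    have huncurry : HasFDerivAt (Function.uncurry φ)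
        ((fderiv ℝ FF' x₀).comp (ContinuousLinearMap.inr ℝ ℝ (ℝ × ℝ))) (pe, se) := by
      apply hcomp.congr_of_eventuallyEq
      exact Filter.Eventually.of_forall fun q => (hsl q.1 q.2).symm
    exact huncurry.fderiv
  have hBs := hslice_deriv FF f hFFd hslicef
  have hCs := hslice_deriv GG g hGGd hsliceg
  -- scalar partial derivatives
  have hpart : ∀ (φ : ℝ → ℝ → ℝ), DifferentiableAt ℝ (Function.uncurry φ) (pe, se) →
      deriv (fun p => φ p se) pe = fderiv ℝ (Function.uncurry φ) (pe, se) (1, 0)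
        ∧ deriv (fun s => φ pe s) se = fderiv ℝ (Function.uncurry φ) (pe, se) (0, 1) := by
    intro φ hφd
    constructor
    · have h1 : HasDerivAt (fun p : ℝ => ((p, se) : ℝ × ℝ)) (1, 0) pe :=
        (hasDerivAt_id pe).prodMk (hasDerivAt_const pe se)
      exact (hφd.hasFDerivAt.comp_hasDerivAt pe h1).deriv
    · have h1 : HasDerivAt (fun s : ℝ => ((pe, s) : ℝ × ℝ)) (0, 1) se :=
        (hasDerivAt_const se pe).prodMk (hasDerivAt_id se)
      exact (hφd.hasFDerivAt.comp_hasDerivAt se h1).deriv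
  obtain ⟨hfp, hfs⟩ := hpart f hfd
  obtain ⟨hgp, hgs⟩ := hpart g hgd
  rw [hfp, hfs, hgp, hgs] at hJ
  -- A is injective
  have hker : ∀ v : ℝ × ℝ × ℝ, A v = 0 → v = 0 := by
    intro v hv
    have h1 : v.1 = 0 := congrArg Prod.fst hv
    have h2 : fderiv ℝ FF x₀ v = 0 := congrArg (fun y : ℝ × ℝ × ℝ => y.2.1) hv
    have h3 : fderiv ℝ GG x₀ v = 0 := congrArg (fun y : ℝ × ℝ × ℝ => y.2.2) hv
    have hv0 : v = ((0:ℝ), v.2) := by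
      rw [← h1]
    have hB2 : fderiv ℝ (Function.uncurry f) (pe, se) v.2 = 0 := by
      rw [hBs]
      show fderiv ℝ FF x₀ ((0:ℝ), v.2) = 0
      rw [← hv0]; exact h2
    have hC2 : fderiv ℝ (Function.uncurry g) (pe, se) v.2 = 0 := by
      rw [hCs]
      show fderiv ℝ GG x₀ ((0:ℝ), v.2) = 0
      rw [← hv0]; exact h3
    have hsplit : v.2 = v.2.1 • ((1:ℝ), (0:ℝ)) + v.2.2 • ((0:ℝ), (1:ℝ)) := by
      simp [Prod.ext_iff]
    have hBexp : v.2.1 * fderiv ℝ (Function.uncurry f) (pe, se) (1, 0)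
        + v.2.2 * fderiv ℝ (Function.uncurry f) (pe, se) (0, 1) = 0 := by
      have h' := hB2
      rw [hsplit, ContinuousLinearMap.map_add, ContinuousLinearMap.map_smul,
        ContinuousLinearMap.map_smul] at h'
      simpa [smul_eq_mul] using h'
    have hCexp : v.2.1 * fderiv ℝ (Function.uncurry g) (pe, se) (1, 0)
        + v.2.2 * fderiv ℝ (Function.uncurry g) (pe, se) (0, 1) = 0 := by
      have h' := hC2
      rw [hsplit, ContinuousLinearMap.map_add, ContinuousLinearMap.map_smul,
        ContinuousLinearMap.map_smul] at h'
      simpa [smul_eq_mul] using h'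
    set b11 := fderiv ℝ (Function.uncurry f) (pe, se) (1, 0)
    set b12 := fderiv ℝ (Function.uncurry f) (pe, se) (0, 1)
    set b21 := fderiv ℝ (Function.uncurry g) (pe, se) (1, 0)
    set b22 := fderiv ℝ (Function.uncurry g) (pe, se) (0, 1)
    have hdp : v.2.1 = 0 := by
      have key : v.2.1 * (b11 * b22 - b12 * b21)
          = b22 * (v.2.1 * b11 + v.2.2 * b12)
            - b12 * (v.2.1 * b21 + v.2.2 * b22) := by ring
      rw [hBexp, hCexp] at key
      simp only [mul_zero, sub_zero] at key
      exact (mul_eq_zero.mp key).resolve_right hJ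
    have hds : v.2.2 = 0 := by
      have key : v.2.2 * (b11 * b22 - b12 * b21)
          = b11 * (v.2.1 * b21 + v.2.2 * b22)
            - b21 * (v.2.1 * b11 + v.2.2 * b12) := by ring
      rw [hBexp, hCexp] at key
      simp only [mul_zero, sub_zero] at key
      exact (mul_eq_zero.mp key).resolve_right hJ
    have : v = (v.1, v.2.1, v.2.2) := rfl
    rw [this, h1, hdp, hds]
    rfl
  have hAinj : Function.Injective A := by
    intro v v' hvv'
    have : A (v - v') = 0 := by rw [map_sub, hvv', sub_self]
    have := hker _ this
    exact sub_eq_zero.mp this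
  have hAbij : Function.Bijective (A.toLinearMap) :=
    ⟨hAinj, (LinearMap.injective_iff_surjective_of_finrank_eq_finrank rfl).mp hAinj⟩
  set e : (ℝ × ℝ × ℝ) ≃L[ℝ] (ℝ × ℝ × ℝ) :=
    (LinearEquiv.ofBijective A.toLinearMap hAbij).toContinuousLinearEquiv with he_def
  have hcoe : (e : (ℝ × ℝ × ℝ) →L[ℝ] (ℝ × ℝ × ℝ)) = A := by
    exact ContinuousLinearMap.ext fun v => rfl
  -- inverse function theorem
  have hΦat : ContDiffAt ℝ 1 Φ x₀ := hΦcd.contDiffAt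
  have hΦd' : HasFDerivAt Φ (e : (ℝ × ℝ × ℝ) →L[ℝ] (ℝ × ℝ × ℝ)) x₀ := by
    rw [hcoe]; exact hΦd
  have hn : (1 : WithTop ℕ∞) ≠ 0 := one_ne_zero
  set Ψ : ℝ × ℝ × ℝ → ℝ × ℝ × ℝ := hΦat.localInverse hΦd' hn with hΨ_def
  have hΨ0 : Ψ (Φ x₀) = x₀ := hΦat.localInverse_apply_image hΦd' hn
  have hΨcd : ContDiffAt ℝ 1 Ψ (Φ x₀) := hΦat.to_localInverse hΦd' hn
  have hrt : ∀ᶠ y in nhds (Φ x₀), Φ (Ψ y) = y :=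
    (hΦat.hasStrictFDerivAt' hΦd' hn).eventually_right_inverse
  rw [hΦx₀] at hΨ0 hΨcd hrt
  -- the branch
  set pbar : ℝ → ℝ := fun a => (Ψ (a, 0, 0)).2.1 with hpbar_def
  set sbar : ℝ → ℝ := fun a => (Ψ (a, 0, 0)).2.2 with hsbar_def
  have hline : ContDiff ℝ 1 (fun a : ℝ => ((a, 0, 0) : ℝ × ℝ × ℝ)) :=
    contDiff_id.prodMk contDiff_const
  have haux : ContDiffAt ℝ 1 (fun a : ℝ => Ψ (a, 0, 0)) 0 :=
    ContDiffAt.comp 0 hΨcd hline.contDiffAt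
  have hpcd : ContDiffAt ℝ 1 pbar 0 :=
    ContDiffAt.comp (g := fun y : ℝ × ℝ × ℝ => y.2.1) (f := fun a : ℝ => Ψ (a, 0, 0)) 0
      (contDiff_snd.fst).contDiffAt haux
  have hscd : ContDiffAt ℝ 1 sbar 0 :=
    ContDiffAt.comp (g := fun y : ℝ × ℝ × ℝ => y.2.2) (f := fun a : ℝ => Ψ (a, 0, 0)) 0
      (contDiff_snd.snd).contDiffAt haux
  obtain ⟨up, hup, hupcd⟩ := hpcd.contDiffOn le_rfl (by simp)
  obtain ⟨us, hus, huscd⟩ := hscd.contDiffOn le_rfl (by simp)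
  have hline_t : Filter.Tendsto (fun a : ℝ => ((a, 0, 0) : ℝ × ℝ × ℝ))
      (nhds 0) (nhds ((0, 0, 0) : ℝ × ℝ × ℝ)) := hline.continuous.tendsto 0
  have hrt0 : ∀ᶠ a : ℝ in nhds 0, Φ (Ψ (a, 0, 0)) = (a, 0, 0) := hline_t.eventually hrt
  have hS : up ∩ us ∩ {a : ℝ | Φ (Ψ (a, 0, 0)) = (a, 0, 0)} ∈ nhds (0:ℝ) :=
    Filter.inter_mem (Filter.inter_mem hup hus) hrt0
  obtain ⟨ε, hε, hball⟩ := Metric.mem_nhds_iff.mp hS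
  refine ⟨ε, hε, pbar, sbar, ?_, ?_, ?_, ?_, ?_⟩
  · have : Set.Ioo (-ε) ε = Metric.ball (0:ℝ) ε := by
      rw [Real.ball_eq_Ioo]; norm_num
    rw [this]
    exact hupcd.mono fun a ha => ((hball ha).1).1
  · have : Set.Ioo (-ε) ε = Metric.ball (0:ℝ) ε := by
      rw [Real.ball_eq_Ioo]; norm_num
    rw [this]
    exact huscd.mono fun a ha => ((hball ha).1).2
  · show (Ψ (0, 0, 0)).2.1 = pe
    rw [hΨ0]
  · show (Ψ (0, 0, 0)).2.2 = se
    rw [hΨ0]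
  · intro a ha
    have haball : a ∈ Metric.ball (0:ℝ) ε := by
      rw [Real.ball_eq_Ioo]; simpa using ha
    have hΦΨ : Φ (Ψ (a, 0, 0)) = (a, 0, 0) := (hball haball).2
    set z := Ψ (a, 0, 0) with hz_def
    have hz1 : z.1 = a := congrArg Prod.fst hΦΨ
    have hzF : FF z = 0 := congrArg (fun y : ℝ × ℝ × ℝ => y.2.1) hΦΨ
    have hzG : GG z = 0 := congrArg (fun y : ℝ × ℝ × ℝ => y.2.2) hΦΨ
    constructor
    · rw [hFFeq]
      show FF (a, z.2.1, z.2.2) = 0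
      rw [← hz1]
      have : ((z.1, z.2.1, z.2.2) : ℝ × ℝ × ℝ) = z := rfl
      rw [this]
      exact hzF
    · rw [hGGeq]
      show GG (a, z.2.1, z.2.2) = 0
      rw [← hz1]
      have : ((z.1, z.2.1, z.2.2) : ℝ × ℝ × ℝ) = z := rfl
      rw [this]
      exact hzG
end
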